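/- arXiv:1401.3495 — 7 statements merged into one kernel-verified Lean document; each statement's English description precedes it below -/
import Mathlib

section
/- For any positive integer r and any real numbers a_1,...,a_r, b all in [0,1], the inequality ∏_{i=1}^r (a_i + b(1-a_i)) ≥ (1-b^r) ∏_{i=1}^r a_i + b^r holds. -/
open Finset

variable {R : Type*} [CommRing R] [LinearOrder R] [IsStrictOrderedRing R]

-- The gap is `b (1 - c) q (1 - x) + c (1 - b) x (1 - q)`, a sum of products of nonnegatives.
lemma one_sub_mul_mul_add_le_mul {x q b c : R} (hx : x ∈ Set.Icc 0 1) (hq : q ∈ Set.Icc 0 1)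
    (hb : b ∈ Set.Icc 0 1) (hc : c ∈ Set.Icc 0 1) :
    (1 - b * c) * (x * q) + b * c ≤ (x + b * (1 - x)) * ((1 - c) * q + c) := by
  have gap : 0 ≤ b * (1 - c) * (q * (1 - x)) + c * (1 - b) * (x * (1 - q)) := by
    have h₁ : 0 ≤ b * (1 - c) * (q * (1 - x)) :=
      mul_nonneg (mul_nonneg hb.1 (sub_nonneg.2 hc.2)) (mul_nonneg hq.1 (sub_nonneg.2 hx.2))
    have h₂ : 0 ≤ c * (1 - b) * (x * (1 - q)) :=
      mul_nonneg (mul_nonneg hc.1 (sub_nonneg.2 hb.2)) (mul_nonneg hx.1 (sub_nonneg.2 hq.2))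
    exact add_nonneg h₁ h₂
  linear_combination gap

lemma Finset.one_sub_pow_card_mul_prod_add_pow_card_le_prod {ι : Type*} (s : Finset ι)
    {a : ι → R} {b : R} (ha : ∀ i ∈ s, a i ∈ Set.Icc 0 1) (hb : b ∈ Set.Icc 0 1) :
    (1 - b ^ #s) * ∏ i ∈ s, a i + b ^ #s ≤ ∏ i ∈ s, (a i + b * (1 - a i)) := by
  induction s using Finset.cons_induction with
  | empty => simp
  | cons j s hjs ih =>
    obtain ⟨hj, ha⟩ := (forall_mem_cons hjs _).1 ha
    have hprod : ∏ i ∈ s, a i ∈ Set.Icc 0 1 :=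
      ⟨prod_nonneg fun i hi => (ha i hi).1,
        prod_le_one (fun i hi => (ha i hi).1) fun i hi => (ha i hi).2⟩
    have hpow : b ^ #s ∈ Set.Icc 0 1 := ⟨pow_nonneg hb.1 _, pow_le_one₀ hb.1 hb.2⟩
    have hfactor : 0 ≤ a j + b * (1 - a j) :=
      add_nonneg hj.1 (mul_nonneg hb.1 (sub_nonneg.2 hj.2))
    rw [prod_cons, prod_cons, card_cons, pow_succ']
    calc (1 - b * b ^ #s) * (a j * ∏ i ∈ s, a i) + b * b ^ #s
        ≤ (a j + b * (1 - a j)) * ((1 - b ^ #s) * ∏ i ∈ s, a i + b ^ #s) :=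
          one_sub_mul_mul_add_le_mul hj hprod hb hpow
      _ ≤ (a j + b * (1 - a j)) * ∏ i ∈ s, (a i + b * (1 - a i)) :=
          mul_le_mul_of_nonneg_left (ih ha) hfactor

theorem stmt_0_general (r : ℕ) (a : Fin r → ℝ) (b : ℝ)
    (ha : ∀ i, a i ∈ Set.Icc (0:ℝ) 1) (hb : b ∈ Set.Icc (0:ℝ) 1) :
    (∏ i, (a i + b * (1 - a i))) ≥ (1 - b ^ r) * ∏ i, a i + b ^ r := by
  simpa using univ.one_sub_pow_card_mul_prod_add_pow_card_le_prod (fun i _ => ha i) hb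

theorem stmt_0 (r : ℕ) (hr : 0 < r) (a : Fin r → ℝ) (b : ℝ)
    (ha : ∀ i, a i ∈ Set.Icc (0:ℝ) 1) (hb : b ∈ Set.Icc (0:ℝ) 1) :
    (∏ i, (a i + b * (1 - a i))) ≥ (1 - b ^ r) * ∏ i, a i + b ^ r :=
  stmt_0_general r a b ha hb
end

section
/- For every x ∈ [0,1] and p ∈ (0,1), x(1-x) (log((x/p)/((1-x)/(1-p))))² ≤ (2 + (1/2)|log(p/(1-p))|)². -/
/-!
Write `s = √x`, `c = √(1 - x)`, so that `x (1 - x) L² = (s c |L|)²` with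
`L = log x - log (1 - x) - a` and `a = log (p / (1 - p))`.
By the triangle inequality `s c |L| ≤ s |log x| + c |log (1 - x)| + s c |a|`.
Applying `log u ≥ 1 - 1/u` at `u = s` gives `s |log x| ≤ 2 (1 - s)`, and likewise for `c`;
since `s + c ≥ 1` and `s c ≤ 1/2`, the right-hand side is at most `2 + |a| / 2`.
-/

open Real

lemma sqrt_mul_abs_log_le {t : ℝ} (ht0 : 0 ≤ t) (ht1 : t ≤ 1) :
    √t * |log t| ≤ 2 * (1 - √t) := by
  rcases ht0.eq_or_lt with rfl | ht0
  · simp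
  have hs : 0 < √t := sqrt_pos.mpr ht0
  have hlog : 1 - (√t)⁻¹ ≤ log t / 2 := by
    rw [← log_sqrt ht0.le]
    exact one_sub_inv_le_log_of_pos hs
  have hscaled : √t * (1 - (√t)⁻¹) ≤ √t * (log t / 2) := mul_le_mul_of_nonneg_left hlog hs.le
  rw [mul_sub, mul_one, mul_inv_cancel₀ hs.ne'] at hscaled
  rw [abs_of_nonpos (log_nonpos ht0.le ht1)]
  linarith

lemma one_le_sqrt_add_sqrt_one_sub {x : ℝ} (hx0 : 0 ≤ x) (hx1 : x ≤ 1) : 1 ≤ √x + √(1 - x) := by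
  have hx : x ≤ √x := le_sqrt_self_iff.mpr hx1
  have h1x : 1 - x ≤ √(1 - x) := le_sqrt_self_iff.mpr (sub_le_self 1 hx0)
  linarith

lemma sqrt_mul_sqrt_one_sub_le {x : ℝ} (hx0 : 0 ≤ x) (hx1 : x ≤ 1) : √x * √(1 - x) ≤ 1 / 2 := by
  have amgm := two_mul_le_add_sq √x √(1 - x)
  rw [sq_sqrt hx0, sq_sqrt (by linarith)] at amgm
  linarith

theorem sqrt_mul_sqrt_one_sub_mul_abs_log_odds_sub_le {x : ℝ} (hx0 : 0 ≤ x) (hx1 : x ≤ 1)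
    (a : ℝ) : √x * √(1 - x) * |log x - log (1 - x) - a| ≤ 2 + 1 / 2 * |a| := by
  set s := √x
  set c := √(1 - x)
  have hs0 : 0 ≤ s := sqrt_nonneg x
  have hc0 : 0 ≤ c := sqrt_nonneg (1 - x)
  have hs1 : s ≤ 1 := sqrt_le_one.mpr hx1
  have hc1 : c ≤ 1 := sqrt_le_one.mpr (by linarith)
  have hlogx : s * c * |log x| ≤ 2 * (1 - s) :=
    (mul_le_mul_of_nonneg_right (mul_le_of_le_one_right hs0 hc1) (abs_nonneg _)).trans
      (sqrt_mul_abs_log_le hx0 hx1)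
  have hlog1x : s * c * |log (1 - x)| ≤ 2 * (1 - c) :=
    (mul_le_mul_of_nonneg_right (mul_le_of_le_one_left hc0 hs1) (abs_nonneg _)).trans
      (sqrt_mul_abs_log_le (by linarith) (by linarith))
  have ha : s * c * |a| ≤ 1 / 2 * |a| :=
    mul_le_mul_of_nonneg_right (sqrt_mul_sqrt_one_sub_le hx0 hx1) (abs_nonneg a)
  calc s * c * |log x - log (1 - x) - a|
      ≤ s * c * (|log x| + |log (1 - x)| + |a|) := by
        gcongr
        exact (abs_sub _ _).trans (add_le_add_left (abs_sub _ _) _)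
    _ ≤ 2 * (1 - s) + 2 * (1 - c) + 1 / 2 * |a| := by
        rw [mul_add, mul_add]
        linarith
    _ ≤ 2 + 1 / 2 * |a| := by linarith [one_le_sqrt_add_sqrt_one_sub hx0 hx1]

theorem stmt_6 (x p : ℝ) (hx : x ∈ Set.Icc (0:ℝ) 1) (hp : p ∈ Set.Ioo (0:ℝ) 1) :
    x * (1 - x) * (Real.log ((x / p) / ((1 - x) / (1 - p)))) ^ 2
      ≤ (2 + (1 / 2) * |Real.log (p / (1 - p))|) ^ 2 := by
  obtain ⟨hx0, hx1⟩ := hx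
  obtain ⟨hp0, hp1⟩ := hp
  rcases hx0.eq_or_lt with rfl | hx0'
  · rw [zero_mul, zero_mul]; positivity
  rcases hx1.eq_or_lt with rfl | hx1'
  · rw [sub_self, mul_zero, zero_mul]; positivity
  have hlog : log ((x / p) / ((1 - x) / (1 - p))) = log x - log (1 - x) - log (p / (1 - p)) := by
    have hx' : 0 < 1 - x := sub_pos.mpr hx1'
    have hp' : 0 < 1 - p := sub_pos.mpr hp1
    rw [div_div_div_comm, log_div (div_pos hx0' hx').ne' (div_pos hp0 hp').ne',
      log_div hx0'.ne' hx'.ne']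
  have hsq : x * (1 - x) = (√x * √(1 - x)) ^ 2 := by
    rw [mul_pow, sq_sqrt hx0, sq_sqrt (by linarith)]
  rw [hlog, hsq, ← sq_abs (_ - _), ← mul_pow]
  exact pow_le_pow_left₀ (by positivity)
    (sqrt_mul_sqrt_one_sub_mul_abs_log_odds_sub_le hx0 hx1 _) 2
end

section
/- Let f: [0,1]^n → ℝ be twice continuously differentiable with ‖∂²f/∂x_i²‖_∞ ≤ c_{ii}. Let F = log ∑_{x∈{0,1}^n} e^{f(x)} and I(y) = ∑_i (y_i log y_i + (1-y_i) log(1-y_i)). Then F ≥ sup_{y∈[0,1]^n} (f(y) − I(y)) − (1/2) ∑_{i=1}^n c_{ii}. -/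
/-!
Gibbs' variational principle gives `log ∑ₓ e^{f(x)} ≥ E_w f - ∑ₓ w log w` for every probability
vector `w` on `{0,1}ⁿ`. Take for `w` the product of Bernoulli(`yᵢ`) laws: its negative entropy is
`I(y)`, and `E_w f` is the multilinear extension of `f|{0,1}ⁿ` evaluated at `y`. Along the `i`-th
coordinate `f + cᵢᵢ t² / 2` is convex, so replacing `yᵢ` by a Bernoulli(`yᵢ`) coin decreases the
value of `f` by at most `cᵢᵢ / 2`; doing this one coordinate at a time gives
`E_w f ≥ f(y) - ½ ∑ᵢ cᵢᵢ`.
-/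

open Finset Real

lemma mul_sub_log_le_exp_sub (u : ℝ) {w : ℝ} (hw : 0 ≤ w) : w * (u - log w) ≤ exp u - w := by
  rcases hw.eq_or_lt with rfl | hw
  · simp [(exp_pos u).le]
  · have h := add_one_le_exp (u - log w)
    rw [exp_sub, exp_log hw, le_div_iff₀ hw] at h
    linarith

lemma sum_mul_sub_sum_mul_log_le_log_sum_exp {α : Type*} [Fintype α] {w : α → ℝ}
    (hw : ∀ x, 0 ≤ w x) (hw1 : ∑ x, w x = 1) (v : α → ℝ) :
    ∑ x, w x * v x - ∑ x, w x * log (w x) ≤ log (∑ x, exp (v x)) := by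
  have hα : Nonempty α := by
    by_contra h
    simp [not_nonempty_iff.mp h] at hw1
  set Z := ∑ x, exp (v x)
  have hZ : 0 < Z := sum_pos (fun x _ => exp_pos _) univ_nonempty
  have key : ∑ x, w x * (v x - log Z - log (w x)) ≤ 0 :=
    calc ∑ x, w x * (v x - log Z - log (w x))
        ≤ ∑ x, (exp (v x - log Z) - w x) :=
          sum_le_sum fun x _ => mul_sub_log_le_exp_sub _ (hw x)
      _ = 0 := by
          rw [sum_sub_distrib, hw1]
          simp only [exp_sub, exp_log hZ, ← sum_div]
          rw [div_self hZ.ne', sub_self]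
  simp only [mul_sub, sum_sub_distrib, ← sum_mul, hw1, one_mul] at key
  linarith

lemma le_lineInterp_add_of_neg_le_deriv2 {g g' g'' : ℝ → ℝ} {c : ℝ}
    (hg : ContinuousOn g (Set.Icc 0 1)) (hg' : ∀ t ∈ Set.Ioo 0 1, HasDerivAt g (g' t) t)
    (hg'' : ∀ t ∈ Set.Ioo 0 1, HasDerivAt g' (g'' t) t)
    (hc : ∀ t ∈ Set.Ioo 0 1, -c ≤ g'' t) {t : ℝ} (ht : t ∈ Set.Icc 0 1) :
    g t ≤ (1 - t) * g 0 + t * g 1 + c / 2 * (t * (1 - t)) := by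
  have hconvex : ConvexOn ℝ (Set.Icc 0 1) fun s => g s + c / 2 * s ^ 2 := by
    refine convexOn_of_hasDerivWithinAt2_nonneg (convex_Icc 0 1)
      (f' := fun s => g' s + c * s) (f'' := fun s => g'' s + c)
      (hg.add (by fun_prop)) (fun s hs => ?_) (fun s hs => ?_) (fun s hs => ?_)
    all_goals rw [interior_Icc] at hs
    · exact ((hg' s hs).add ((hasDerivAt_pow 2 s).const_mul (c / 2) |>.congr_deriv
        (by ring))).hasDerivWithinAt
    · exact ((hg'' s hs).add ((hasDerivAt_id s).const_mul c |>.congr_deriv (by simp)))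
        |>.hasDerivWithinAt
    · linarith [hc s hs]
  have h := hconvex.2 (x := 0) (y := 1) ⟨le_rfl, zero_le_one⟩ ⟨zero_le_one, le_rfl⟩
    (sub_nonneg.2 ht.2) ht.1 (by ring)
  simp only [smul_eq_mul, mul_zero, mul_one, zero_add] at h
  nlinarith

section Bernoulli

variable {ι : Type*} [Fintype ι]

def bernoulliProd (y : ι → ℝ) (x : ι → Bool) : ℝ :=
  ∏ i, if x i then y i else 1 - y i

def cubeVertex (x : ι → Bool) : ι → ℝ := fun i => if x i then 1 else 0

lemma bernoulliProd_nonneg {y : ι → ℝ} (hy : y ∈ Set.Icc 0 1) (x : ι → Bool) :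
    0 ≤ bernoulliProd y x :=
  prod_nonneg fun i _ => by
    have h0 := hy.1 i
    have h1 := hy.2 i
    simp only [Pi.zero_apply, Pi.one_apply] at h0 h1
    cases x i <;> simp <;> linarith

lemma bernoulliProd_cubeVertex (x₀ x : ι → Bool) :
    bernoulliProd (cubeVertex x₀) x = if x = x₀ then 1 else 0 := by
  have hfactor : ∀ i, (if x i then cubeVertex x₀ i else 1 - cubeVertex x₀ i)
      = if x i = x₀ i then 1 else 0 := by
    intro i
    simp only [cubeVertex]
    cases x i <;> cases x₀ i <;> simp
  simp only [bernoulliProd, hfactor, Fintype.prod_boole, funext_iff]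

variable [DecidableEq ι]

def multilinearExt (g : (ι → Bool) → ℝ) (y : ι → ℝ) : ℝ :=
  ∑ x, bernoulliProd y x * g x

lemma sum_bernoulliProd (y : ι → ℝ) : ∑ x, bernoulliProd y x = 1 := by
  unfold bernoulliProd
  rw [← Fintype.prod_sum fun i (b : Bool) => if b then y i else 1 - y i]
  simp

lemma sum_bernoulliProd_mul_apply (y : ι → ℝ) (i : ι) (F : Bool → ℝ) :
    ∑ x, bernoulliProd y x * F (x i) = (1 - y i) * F false + y i * F true := by
  have hfactor : ∀ x : ι → Bool, bernoulliProd y x * F (x i) =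
      ∏ j, (if x j then y j else 1 - y j) * (if j = i then F (x j) else 1) := by
    intro x
    rw [prod_mul_distrib, Fintype.prod_ite_eq']
    rfl
  simp_rw [hfactor]
  rw [← Fintype.prod_sum fun j (b : Bool) =>
    (if b then y j else 1 - y j) * (if j = i then F b else 1)]
  rw [Fintype.prod_eq_single i fun j hj => by simp [hj]]
  simp [add_comm]

lemma sum_bernoulliProd_mul_log (y : ι → ℝ) :
    ∑ x, bernoulliProd y x * log (bernoulliProd y x)
      = ∑ i, (y i * log (y i) + (1 - y i) * log (1 - y i)) := by
  have hlog : ∀ x : ι → Bool, bernoulliProd y x * log (bernoulliProd y x)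
      = ∑ i, bernoulliProd y x * log (if x i then y i else 1 - y i) := by
    intro x
    by_cases hw : bernoulliProd y x = 0
    · simp [hw]
    · rw [← mul_sum, bernoulliProd, log_prod fun i _ h => hw (prod_eq_zero (mem_univ i) h)]
  simp_rw [hlog]
  rw [sum_comm]
  refine sum_congr rfl fun i _ => ?_
  rw [sum_bernoulliProd_mul_apply y i fun b => log (if b then y i else 1 - y i)]
  simp only [Bool.false_eq_true, if_false, if_true]
  ring

lemma bernoulliProd_update (y : ι → ℝ) (k : ι) (t : ℝ) (x : ι → Bool) :
    bernoulliProd (Function.update y k t) x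
      = (if x k then t else 1 - t) * ∏ i ∈ univ.erase k, (if x i then y i else 1 - y i) := by
  rw [bernoulliProd, ← mul_prod_erase univ _ (mem_univ k), Function.update_self]
  congr 1
  exact prod_congr rfl fun i hi => by rw [Function.update_of_ne (ne_of_mem_erase hi)]

lemma bernoulliProd_eq_update (y : ι → ℝ) (k : ι) (x : ι → Bool) :
    bernoulliProd y x = (1 - y k) * bernoulliProd (Function.update y k 0) x
      + y k * bernoulliProd (Function.update y k 1) x := by
  conv_lhs => rw [← Function.update_eq_self k y]
  simp only [bernoulliProd_update]
  cases x k <;> simp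

lemma multilinearExt_cubeVertex (g : (ι → Bool) → ℝ) (x : ι → Bool) :
    multilinearExt g (cubeVertex x) = g x := by
  simp [multilinearExt, bernoulliProd_cubeVertex]

lemma multilinearExt_eq_update (g : (ι → Bool) → ℝ) (y : ι → ℝ) (k : ι) :
    multilinearExt g y = (1 - y k) * multilinearExt g (Function.update y k 0)
      + y k * multilinearExt g (Function.update y k 1) := by
  simp only [multilinearExt, mul_sum, ← sum_add_distrib]
  refine sum_congr rfl fun x _ => ?_
  rw [bernoulliProd_eq_update y k x]
  ring

end Bernoulli

section Cube

variable {ι : Type*} [DecidableEq ι]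

lemma update_mem_Icc {y : ι → ℝ} (hy : y ∈ Set.Icc 0 1) (k : ι) {t : ℝ}
    (ht : t ∈ Set.Icc 0 1) : Function.update y k t ∈ Set.Icc 0 1 :=
  ⟨le_update_iff.2 ⟨ht.1, fun j _ => hy.1 j⟩,
    update_le_iff.2 ⟨ht.2, fun j _ => hy.2 j⟩⟩

variable [Fintype ι]

lemma le_multilinearExt_add {F : (ι → ℝ) → ℝ} {d : ι → ℝ}
    (hF : ∀ y ∈ Set.Icc 0 1, ∀ k, F y ≤ (1 - y k) * F (Function.update y k 0)
      + y k * F (Function.update y k 1) + d k)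
    {y : ι → ℝ} (hy : y ∈ Set.Icc 0 1) :
    F y ≤ multilinearExt (F ∘ cubeVertex) y + ∑ k, d k := by
  suffices ∀ s : Finset ι, ∀ y ∈ Set.Icc 0 1, (∀ i ∉ s, y i = 0 ∨ y i = 1) →
      F y ≤ multilinearExt (F ∘ cubeVertex) y + ∑ k ∈ s, d k from
    this univ y hy fun i hi => absurd (mem_univ i) hi
  intro s
  induction s using Finset.induction_on with
  | empty =>
    intro y _ hbinary
    have hvertex : y = cubeVertex fun i => decide (y i = 1) := by
      funext i
      rcases hbinary i (notMem_empty i) with h | h <;> simp [cubeVertex, h]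
    rw [hvertex, multilinearExt_cubeVertex]
    simp
  | insert k s hk ih =>
    intro y hy hbinary
    have hbinary' : ∀ t : ℝ, t = 0 ∨ t = 1 → ∀ i ∉ s,
        Function.update y k t i = 0 ∨ Function.update y k t i = 1 := by
      intro t ht i hi
      by_cases hik : i = k
      · simpa [hik] using ht
      · simpa [hik] using hbinary i (by simp [hik, hi])
    have ih0 := ih _ (update_mem_Icc hy k ⟨le_rfl, zero_le_one⟩) (hbinary' 0 (.inl rfl))
    have ih1 := ih _ (update_mem_Icc hy k ⟨zero_le_one, le_rfl⟩) (hbinary' 1 (.inr rfl))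
    have hyk0 : 0 ≤ y k := hy.1 k
    have hyk1 : 0 ≤ 1 - y k := sub_nonneg.2 (hy.2 k)
    rw [multilinearExt_eq_update _ y k, sum_insert hk]
    nlinarith [hF y hy k, mul_le_mul_of_nonneg_left ih0 hyk1, mul_le_mul_of_nonneg_left ih1 hyk0]

lemma le_lineInterp_update_add {f : (ι → ℝ) → ℝ} (hf : ContDiff ℝ 2 f) {k : ι} {ck : ℝ}
    (hck : ∀ x ∈ Set.Icc (0 : ι → ℝ) 1,
      |fderiv ℝ (fun z => fderiv ℝ f z (Pi.single k 1)) x (Pi.single k 1)| ≤ ck)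
    {y : ι → ℝ} (hy : y ∈ Set.Icc 0 1) :
    f y ≤ (1 - y k) * f (Function.update y k 0) + y k * f (Function.update y k 1) + ck / 2 := by
  set e : ι → ℝ := Pi.single k 1
  have hyk0 : 0 ≤ y k := hy.1 k
  have hyk1 : y k ≤ 1 := hy.2 k
  have hf1 : Differentiable ℝ f := hf.differentiable (by norm_num)
  have hdf : Differentiable ℝ fun z => fderiv ℝ f z e :=
    ((hf.fderiv_right (m := 1) le_rfl).clm_apply contDiff_const).differentiable one_ne_zero
  have hline := le_lineInterp_add_of_neg_le_deriv2 (g := fun t => f (Function.update y k t))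
    (g' := fun t => fderiv ℝ f (Function.update y k t) e)
    (g'' := fun t => fderiv ℝ (fun z => fderiv ℝ f z e) (Function.update y k t) e) (c := ck)
    (hf1.continuous.comp (continuous_const.update k continuous_id)).continuousOn
    (fun t _ => (hf1 _).hasFDerivAt.comp_hasDerivAt t (hasDerivAt_update y k t))
    (fun t _ => (hdf _).hasFDerivAt.comp_hasDerivAt t (hasDerivAt_update y k t))
    (fun t ht => neg_le_of_abs_le (hck _ (update_mem_Icc hy k (Set.Ioo_subset_Icc_self ht))))
    ⟨hyk0, hyk1⟩
  have hck0 : 0 ≤ ck := (abs_nonneg _).trans (hck y hy)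
  have hvar : y k * (1 - y k) ≤ 1 := by nlinarith
  simp only [Function.update_eq_self] at hline
  nlinarith [mul_le_mul_of_nonneg_left hvar hck0]

end Cube

theorem stmt_8 (n : ℕ) (f : (Fin n → ℝ) → ℝ) (hf : ContDiff ℝ 2 f)
    (c : Fin n → ℝ)
    (hc : ∀ i, ∀ x ∈ Set.Icc (0 : Fin n → ℝ) 1,
      |fderiv ℝ (fun z => fderiv ℝ f z (Pi.single i 1)) x (Pi.single i 1)| ≤ c i) :
    ∀ y ∈ Set.Icc (0 : Fin n → ℝ) 1,
      Real.log (∑ x : Fin n → Bool, Real.exp (f (fun i => if x i then 1 else 0)))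
        ≥ (f y - ∑ i, (y i * Real.log (y i) + (1 - y i) * Real.log (1 - y i)))
          - (1 / 2) * ∑ i, c i := by
  intro y hy
  have hgibbs := sum_mul_sub_sum_mul_log_le_log_sum_exp (bernoulliProd_nonneg hy)
    (sum_bernoulliProd y) (f ∘ cubeVertex)
  have hmean := le_multilinearExt_add (d := fun i => c i / 2)
    (fun z hz k => le_lineInterp_update_add hf (hc k) hz) hy
  rw [sum_bernoulliProd_mul_log] at hgibbs
  rw [multilinearExt, ← sum_div] at hmean
  change log (∑ x, exp ((f ∘ cubeVertex) x)) ≥ _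
  linarith
end

section
/- For any τ ∈ (0,1) there exists a finite set W(τ) of N×N real matrices with |W(τ)| ≤ exp(34(N/τ²) log(51/τ²)) such that for every N×N matrix M with entries in [0,1] there exists W ∈ W(τ) with ‖M − W‖_op ≤ Nτ, where ‖·‖_op denotes the ℓ²-operator norm. -/
/-!
Deflating a linear map `T` by a top singular direction (`T ↦ T ∘ (1 - x xᵀ)` with `‖T x‖ = ‖T‖`)
does not increase its operator norm and lowers `‖T‖²_HS` by `‖T‖²`; after `k` steps the
residual `R` of the rank-one terms peeled off satisfies `k ‖R‖² ≤ ‖T‖²_HS`. A matrix with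
entries in `[0, 1]` has `‖T‖_HS ≤ N`, so `k = ⌈4/τ²⌉` terms `u_i v_iᵀ` with `‖u_i‖ ≤ N`,
`‖v_i‖ ≤ 1` approximate it within `Nτ/2`. Rounding `u_i / N` and `v_i` to a `τ/(4k)`-net of the
unit ball, which has at most `(12k/τ)^N` points by a volume count, costs another `Nτ/2`; the
rounded sums form `W(τ)`.
-/

open Module Metric MeasureTheory InnerProductSpace ContinuousLinearMap
open scoped ENNReal InnerProductSpace RealInnerProductSpace

section Net

variable {E : Type*} [NormedAddCommGroup E] [NormedSpace ℝ E] [FiniteDimensional ℝ E]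

theorem card_le_of_pairwise_le_dist {s : Finset E} {δ : ℝ} (hδ : 0 < δ) (hδ1 : δ ≤ 1)
    (hs : ∀ x ∈ s, ‖x‖ ≤ 1) (hsep : (s : Set E).Pairwise fun x y => δ ≤ dist x y) :
    (s.card : ℝ) ≤ (3 / δ) ^ finrank ℝ E := by
  borelize E
  set μ : Measure E := Measure.addHaar
  have hδ2 : 0 < δ / 2 := half_pos hδ
  have hdisj : (s : Set E).PairwiseDisjoint fun x => ball x (δ / 2) := fun x hx y hy hxy =>
    ball_disjoint_ball (by linarith [hsep hx hy hxy])
  have hsub : ⋃ x ∈ s, ball x (δ / 2) ⊆ ball 0 (1 + δ / 2) := by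
    simp only [Set.iUnion_subset_iff]
    intro x hx y hy
    rw [mem_ball_zero_iff]
    calc ‖y‖ ≤ ‖y - x‖ + ‖x‖ := norm_le_norm_sub_add y x
      _ < δ / 2 + 1 := add_lt_add_of_lt_of_le (mem_ball_iff_norm.mp hy) (hs x hx)
      _ = 1 + δ / 2 := add_comm _ _
  have hvol : (s.card : ℝ≥0∞) * μ (ball 0 (δ / 2)) ≤ μ (ball 0 (1 + δ / 2)) :=
    calc (s.card : ℝ≥0∞) * μ (ball 0 (δ / 2)) = ∑ x ∈ s, μ (ball x (δ / 2)) := by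
          simp [Measure.addHaar_ball_center]
      _ = μ (⋃ x ∈ s, ball x (δ / 2)) :=
          (measure_biUnion_finset hdisj fun _ _ => measurableSet_ball).symm
      _ ≤ μ (ball 0 (1 + δ / 2)) := measure_mono hsub
  have hball : ∀ r : ℝ, 0 < r →
      μ (ball 0 r) = ENNReal.ofReal (r ^ finrank ℝ E) * μ (ball 0 1) := fun r hr =>
    Measure.addHaar_ball_of_pos μ 0 hr
  rw [hball (δ / 2) hδ2, hball (1 + δ / 2) (by positivity), ← mul_assoc,
    ENNReal.mul_le_mul_iff_left (measure_ball_pos μ _ one_pos).ne' measure_ball_lt_top.ne,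
    ← ENNReal.ofReal_natCast, ← ENNReal.ofReal_mul (by positivity),
    ENNReal.ofReal_le_ofReal_iff (by positivity)] at hvol
  calc (s.card : ℝ) ≤ ((1 + δ / 2) / (δ / 2)) ^ finrank ℝ E := by
        rwa [div_pow, le_div_iff₀ (by positivity)]
    _ ≤ (3 / δ) ^ finrank ℝ E := by
        gcongr ?_ ^ _
        rw [div_le_div_iff₀ hδ2 hδ]
        nlinarith

theorem exists_finset_net_unitBall {δ : ℝ} (hδ : 0 < δ) (hδ1 : δ ≤ 1) :
    ∃ s : Finset E, (∀ y ∈ s, ‖y‖ ≤ 1) ∧ (s.card : ℝ) ≤ (3 / δ) ^ finrank ℝ E ∧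
      ∀ x : E, ‖x‖ ≤ 1 → ∃ y ∈ s, ‖x - y‖ ≤ δ := by
  classical
  set Packing : Set (Finset E) :=
    {s | (∀ y ∈ s, ‖y‖ ≤ 1) ∧ (s : Set E).Pairwise fun x y => δ ≤ dist x y}
  set C := ⌊(3 / δ) ^ finrank ℝ E⌋₊
  have hC : ∀ s ∈ Packing, s.card ≤ C := fun s hs =>
    Nat.le_floor (card_le_of_pairwise_le_dist hδ hδ1 hs.1 hs.2)
  -- a `δ`-separated subset of the unit ball of maximal cardinality is a `δ`-net
  obtain ⟨s, ⟨hs_ball, hs_sep⟩, hs_max⟩ :=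
    (measure fun s : Finset E => C - s.card).wf.has_min Packing ⟨∅, by simp [Packing]⟩
  refine ⟨s, hs_ball, card_le_of_pairwise_le_dist hδ hδ1 hs_ball hs_sep, fun x hx => ?_⟩
  by_contra! hfar
  have hx_notMem : x ∉ s := fun hxs => lt_asymm hδ (by simpa using hfar x hxs)
  have hinsert : insert x s ∈ Packing := by
    refine ⟨by simpa [hx] using hs_ball, ?_⟩
    rw [Finset.coe_insert, Set.pairwise_insert]
    refine ⟨hs_sep, fun y hy _ => ?_⟩
    rw [dist_comm y x, and_self, dist_eq_norm]
    exact (hfar y hy).le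
  have hcard := Finset.card_insert_of_notMem hx_notMem
  have hle := hC _ hinsert
  exact hs_max _ hinsert (show C - (insert x s).card < C - s.card by omega)

end Net

theorem exists_mem_norm_sub_smul_le {E : Type*} [SeminormedAddCommGroup E] [NormedSpace ℝ E]
    {s : Set E} {δ c : ℝ} (hs : ∀ x : E, ‖x‖ ≤ 1 → ∃ y ∈ s, ‖x - y‖ ≤ δ) (hc : 0 ≤ c) {u : E}
    (hu : ‖u‖ ≤ c) : ∃ y ∈ s, ‖u - c • y‖ ≤ c * δ := by
  rcases hc.eq_or_lt with rfl | hc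
  · obtain ⟨y, hy, -⟩ := hs 0 (by simp)
    exact ⟨y, hy, by simpa using hu⟩
  obtain ⟨y, hy, hδ⟩ := hs (c⁻¹ • u) (by
    rw [norm_smul, Real.norm_of_nonneg (inv_nonneg.2 hc.le), inv_mul_le_iff₀ hc, mul_one]
    exact hu)
  refine ⟨y, hy, ?_⟩
  calc ‖u - c • y‖ = ‖c • (c⁻¹ • u - y)‖ := by rw [smul_sub, smul_inv_smul₀ hc.ne']
    _ = c * ‖c⁻¹ • u - y‖ := by rw [norm_smul, Real.norm_of_nonneg hc.le]
    _ ≤ c * δ := by gcongr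

theorem exists_norm_apply_eq_opNorm {E F : Type*} [NormedAddCommGroup E] [NormedSpace ℝ E]
    [FiniteDimensional ℝ E] [Nontrivial E] [SeminormedAddCommGroup F] [NormedSpace ℝ F]
    (T : E →L[ℝ] F) : ∃ x : E, ‖x‖ = 1 ∧ ‖T x‖ = ‖T‖ := by
  have hK : IsCompact ((fun x => ‖T x‖) '' sphere (0 : E) 1) :=
    (isCompact_sphere 0 1).image (by fun_prop)
  obtain ⟨x, hx, hmax⟩ := hK.sSup_mem ((NormedSpace.sphere_nonempty.2 zero_le_one).image _)
  exact ⟨x, by simpa using hx, hmax.trans T.sSup_sphere_eq_norm⟩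

section LowRank

variable {E F : Type*} [NormedAddCommGroup E] [InnerProductSpace ℝ E]
  [NormedAddCommGroup F] [InnerProductSpace ℝ F]

theorem norm_comp_one_sub_rankOne_self_le [CompleteSpace E] (T : E →L[ℝ] F) {x : E}
    (hx : ‖x‖ = 1) : ‖T ∘L (1 - rankOne ℝ x x)‖ ≤ ‖T‖ :=
  calc ‖T ∘L (1 - rankOne ℝ x x)‖ ≤ ‖T‖ * ‖1 - rankOne ℝ x x‖ := opNorm_comp_le _ _
    _ ≤ ‖T‖ * 1 := by
        gcongr
        exact IsStarProjection.norm_le _ (isStarProjection_rankOne_self hx).one_sub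
    _ = ‖T‖ := mul_one _

theorem norm_rankOne_sub_rankOne_le (u u' : F) (v v' : E) :
    ‖rankOne ℝ u v - rankOne ℝ u' v'‖ ≤ ‖u‖ * ‖v - v'‖ + ‖u - u'‖ * ‖v'‖ := by
  have : rankOne ℝ u v - rankOne ℝ u' v' = rankOne ℝ u (v - v') + rankOne ℝ (u - u') v' := by
    simp only [map_sub, sub_apply]
    abel
  rw [this]
  exact (norm_add_le _ _).trans_eq (by rw [norm_rankOne, norm_rankOne])

theorem norm_sub_sum_rankOne_le {ι : Type*} [Fintype ι] (T : E →L[ℝ] F) {u u' : ι → F}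
    {v v' : ι → E} {a δu δv : ℝ} (hu : ∀ i, ‖u i‖ ≤ a) (hv' : ∀ i, ‖v' i‖ ≤ 1)
    (hδu : ∀ i, ‖u i - u' i‖ ≤ δu) (hδv : ∀ i, ‖v i - v' i‖ ≤ δv) :
    ‖T - ∑ i, rankOne ℝ (u' i) (v' i)‖ ≤
      ‖T - ∑ i, rankOne ℝ (u i) (v i)‖ + Fintype.card ι * (a * δv + δu) := by
  have hterm : ∀ i, ‖rankOne ℝ (u i) (v i) - rankOne ℝ (u' i) (v' i)‖ ≤ a * δv + δu := fun i =>
    calc _ ≤ ‖u i‖ * ‖v i - v' i‖ + ‖u i - u' i‖ * ‖v' i‖ := norm_rankOne_sub_rankOne_le _ _ _ _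
      _ ≤ a * δv + δu * 1 := by
          gcongr
          · exact (norm_nonneg _).trans (hu i)
          · exact hu i
          · exact hδv i
          · exact (norm_nonneg _).trans (hδu i)
          · exact hδu i
          · exact hv' i
      _ = a * δv + δu := by rw [mul_one]
  calc ‖T - ∑ i, rankOne ℝ (u' i) (v' i)‖
      = ‖(T - ∑ i, rankOne ℝ (u i) (v i)) +
          ∑ i, (rankOne ℝ (u i) (v i) - rankOne ℝ (u' i) (v' i))‖ := by
        rw [Finset.sum_sub_distrib, sub_add_sub_cancel]
    _ ≤ ‖T - ∑ i, rankOne ℝ (u i) (v i)‖ +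
          ∑ i, ‖rankOne ℝ (u i) (v i) - rankOne ℝ (u' i) (v' i)‖ :=
        (norm_add_le _ _).trans (add_le_add_right (norm_sum_le _ _) _)
    _ ≤ ‖T - ∑ i, rankOne ℝ (u i) (v i)‖ + Fintype.card ι * (a * δv + δu) := by
        grw [Finset.sum_le_sum fun i _ => hterm i]
        rw [Finset.sum_const, Finset.card_univ, nsmul_eq_mul]

variable [FiniteDimensional ℝ E] [CompleteSpace F]

noncomputable def hilbertSchmidtNormSq (T : E →L[ℝ] F) : ℝ :=
  LinearMap.trace ℝ E (adjoint T ∘L T).toLinearMap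

theorem hilbertSchmidtNormSq_eq_sum {ι : Type*} [Fintype ι] (T : E →L[ℝ] F)
    (b : OrthonormalBasis ι ℝ E) : hilbertSchmidtNormSq T = ∑ i, ‖T (b i)‖ ^ 2 := by
  rw [hilbertSchmidtNormSq, LinearMap.trace_eq_sum_inner _ b]
  congr! 1 with i
  simp [adjoint_inner_right]

theorem hilbertSchmidtNormSq_nonneg (T : E →L[ℝ] F) : 0 ≤ hilbertSchmidtNormSq T := by
  rw [hilbertSchmidtNormSq_eq_sum T (stdOrthonormalBasis ℝ E)]
  positivity

theorem hilbertSchmidtNormSq_comp_one_sub_rankOne_self (T : E →L[ℝ] F) {x : E} (hx : ‖x‖ = 1) :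
    hilbertSchmidtNormSq (T ∘L (1 - rankOne ℝ x x)) = hilbertSchmidtNormSq T - ‖T x‖ ^ 2 := by
  classical
  have hxon : Orthonormal ℝ ((↑) : ({x} : Set E) → E) := by
    rw [orthonormal_subtype_iff_ite]
    rintro v rfl w rfl
    simp [hx]
  obtain ⟨s, b, hxs, hb⟩ := hxon.exists_orthonormalBasis_extension
  set i₀ : s := ⟨x, hxs rfl⟩
  have hbi₀ : b i₀ = x := by rw [hb]
  have hcomp : ∀ i, (T ∘L (1 - rankOne ℝ x x)) (b i) = if i = i₀ then 0 else T (b i) := by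
    intro i
    split_ifs with hi
    · subst hi
      simp [hbi₀, hx]
    · have : ⟪x, b i⟫ = 0 := hbi₀ ▸ b.orthonormal.2 (Ne.symm hi)
      simp [this]
  rw [hilbertSchmidtNormSq_eq_sum _ b, hilbertSchmidtNormSq_eq_sum _ b,
    ← Finset.add_sum_erase _ _ (Finset.mem_univ i₀),
    ← Finset.add_sum_erase _ (fun i => ‖T (b i)‖ ^ 2) (Finset.mem_univ i₀),
    Finset.sum_congr rfl fun i hi => by rw [hcomp, if_neg (Finset.ne_of_mem_erase hi)]]
  simp [hbi₀, hx]

theorem sq_opNorm_le_hilbertSchmidtNormSq (T : E →L[ℝ] F) :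
    ‖T‖ ^ 2 ≤ hilbertSchmidtNormSq T := by
  cases subsingleton_or_nontrivial E
  · simpa [Subsingleton.elim T 0] using hilbertSchmidtNormSq_nonneg T
  obtain ⟨x, hx, hTx⟩ := exists_norm_apply_eq_opNorm T
  have := hilbertSchmidtNormSq_comp_one_sub_rankOne_self T hx
  rw [hTx] at this
  linarith [hilbertSchmidtNormSq_nonneg (T ∘L (1 - rankOne ℝ x x))]

theorem exists_sum_rankOne_approx (k : ℕ) (T : E →L[ℝ] F) :
    ∃ (u : Fin k → F) (v : Fin k → E), (∀ i, ‖u i‖ ≤ ‖T‖) ∧ (∀ i, ‖v i‖ ≤ 1) ∧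
      ‖T - ∑ i, rankOne ℝ (u i) (v i)‖ ≤ ‖T‖ ∧
      k * ‖T - ∑ i, rankOne ℝ (u i) (v i)‖ ^ 2 ≤ hilbertSchmidtNormSq T := by
  induction k generalizing T with
  | zero => exact ⟨Fin.elim0, Fin.elim0, fun i => i.elim0, fun i => i.elim0, by simp,
      by simpa using hilbertSchmidtNormSq_nonneg T⟩
  | succ k ih =>
    cases subsingleton_or_nontrivial E
    · have hzero : ∀ S : E →L[ℝ] F, S = 0 := fun S => ext fun y => by simp [Subsingleton.elim y 0]
      refine ⟨0, 0, by simp, by simp, by simp [hzero (T - _)], ?_⟩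
      simpa [hzero (T - _)] using hilbertSchmidtNormSq_nonneg T
    obtain ⟨x, hx, hTx⟩ := exists_norm_apply_eq_opNorm T
    set T' := T ∘L (1 - rankOne ℝ x x)
    have hT'_le : ‖T'‖ ≤ ‖T‖ := norm_comp_one_sub_rankOne_self_le T hx
    obtain ⟨u, v, hu, hv, hres, hk⟩ := ih T'
    have hresidual : T - ∑ i, rankOne ℝ ((Fin.cons (T x) u : Fin (k + 1) → F) i)
        ((Fin.cons x v : Fin (k + 1) → E) i) = T' - ∑ i, rankOne ℝ (u i) (v i) := by
      rw [Fin.sum_univ_succ]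
      simp only [Fin.cons_zero, Fin.cons_succ, T', comp_sub, one_def, comp_id, comp_rankOne]
      abel
    refine ⟨Fin.cons (T x) u, Fin.cons x v, Fin.forall_fin_succ.2 ⟨hTx.le, fun i => ?_⟩,
      Fin.forall_fin_succ.2 ⟨hx.le, hv⟩, hresidual ▸ hres.trans hT'_le, ?_⟩
    · simpa using (hu i).trans hT'_le
    rw [hresidual]
    have hHS := hilbertSchmidtNormSq_comp_one_sub_rankOne_self T hx
    have hres_sq : ‖T' - ∑ i, rankOne ℝ (u i) (v i)‖ ^ 2 ≤ ‖T x‖ ^ 2 := by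
      rw [hTx]
      gcongr
      exact hres.trans hT'_le
    push_cast
    linarith

theorem exists_mem_net_norm_sub_sum_rankOne_le {sE : Set E} {sF : Set F} {δ c ε : ℝ} {k : ℕ}
    (hsE_norm : ∀ y ∈ sE, ‖y‖ ≤ 1) (hsE : ∀ x : E, ‖x‖ ≤ 1 → ∃ y ∈ sE, ‖x - y‖ ≤ δ)
    (hsF : ∀ x : F, ‖x‖ ≤ 1 → ∃ y ∈ sF, ‖x - y‖ ≤ δ) {T : E →L[ℝ] F}
    (hT : hilbertSchmidtNormSq T ≤ c ^ 2) (hc : 0 ≤ c) (hk : 0 < k) (hkε : c ^ 2 ≤ k * ε ^ 2)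
    (hε : 0 ≤ ε) :
    ∃ (a : Fin k → F) (b : Fin k → E), (∀ i, a i ∈ sF) ∧ (∀ i, b i ∈ sE) ∧
      ‖T - ∑ i, rankOne ℝ (c • a i) (b i)‖ ≤ ε + 2 * k * c * δ := by
  have hTc : ‖T‖ ≤ c := (pow_le_pow_iff_left₀ (norm_nonneg _) hc two_ne_zero).1
    ((sq_opNorm_le_hilbertSchmidtNormSq T).trans hT)
  obtain ⟨u, v, hu, hv, -, hres⟩ := exists_sum_rankOne_approx k T
  have hres_le : ‖T - ∑ i, rankOne ℝ (u i) (v i)‖ ≤ ε := by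
    refine (pow_le_pow_iff_left₀ (norm_nonneg _) hε two_ne_zero).1 ?_
    have hk' : (0 : ℝ) < k := by exact_mod_cast hk
    nlinarith [hres.trans (hT.trans hkε)]
  choose a ha hau using fun i => exists_mem_norm_sub_smul_le hsF hc ((hu i).trans hTc)
  choose b hb hbv using fun i => hsE (v i) (hv i)
  refine ⟨a, b, ha, hb, ?_⟩
  calc _ ≤ ‖T - ∑ i, rankOne ℝ (u i) (v i)‖ + Fintype.card (Fin k) * (c * δ + c * δ) :=
        norm_sub_sum_rankOne_le T (fun i => (hu i).trans hTc) (fun i => hsE_norm _ (hb i)) hau hbv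
    _ ≤ ε + 2 * k * c * δ := by
        rw [Fintype.card_fin]
        linarith

end LowRank

theorem hilbertSchmidtNormSq_toEuclideanCLM {n : Type*} [Fintype n] [DecidableEq n]
    (M : Matrix n n ℝ) :
    hilbertSchmidtNormSq (Matrix.toEuclideanCLM (𝕜 := ℝ) M) = ∑ i, ∑ j, M i j ^ 2 := by
  rw [hilbertSchmidtNormSq_eq_sum _ (EuclideanSpace.basisFun n ℝ), Finset.sum_comm]
  congr! 1 with j
  rw [EuclideanSpace.norm_sq_eq]
  congr! 1 with i
  simp

theorem hilbertSchmidtNormSq_toEuclideanCLM_le {n : Type*} [Fintype n] [DecidableEq n]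
    {M : Matrix n n ℝ} (hM : ∀ i j, |M i j| ≤ 1) :
    hilbertSchmidtNormSq (Matrix.toEuclideanCLM (𝕜 := ℝ) M) ≤ (Fintype.card n : ℝ) ^ 2 := by
  rw [hilbertSchmidtNormSq_toEuclideanCLM]
  calc ∑ i, ∑ j, M i j ^ 2 ≤ ∑ _i : n, ∑ _j : n, (1 : ℝ) := by
        gcongr with i _ j _
        exact (sq_le_one_iff_abs_le_one _).2 (hM i j)
    _ = (Fintype.card n : ℝ) ^ 2 := by simp [sq]

theorem card_image_piFinset_prod_le {α β ι : Type*} [DecidableEq ι] [Fintype ι] [DecidableEq β]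
    (s : Finset α) (f : (ι → α) × (ι → α) → β) :
    ((Fintype.piFinset (fun _ => s) ×ˢ Fintype.piFinset fun _ => s).image f).card ≤
      s.card ^ (2 * Fintype.card ι) :=
  Finset.card_image_le.trans_eq (by simp [two_mul, pow_add])

theorem ceil_four_div_sq_le {τ : ℝ} (hτ0 : 0 < τ) (hτ1 : τ < 1) :
    (⌈4 / τ ^ 2⌉₊ : ℝ) ≤ 5 / τ ^ 2 := by
  have hceil : (⌈4 / τ ^ 2⌉₊ : ℝ) < 4 / τ ^ 2 + 1 := Nat.ceil_lt_add_one (by positivity)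
  have hone : 1 ≤ 1 / τ ^ 2 := by rw [le_div_iff₀ (by positivity)]; nlinarith
  linarith [show 5 / τ ^ 2 = 4 / τ ^ 2 + 1 / τ ^ 2 by ring]

theorem pow_le_exp_mul_log_div_sq {N k : ℕ} {τ : ℝ} (hτ0 : 0 < τ) (hτ1 : τ < 1) (hk0 : 0 < k)
    (hk : (k : ℝ) ≤ 5 / τ ^ 2) :
    (12 * k / τ) ^ (2 * k * N) ≤ Real.exp (34 * (N / τ ^ 2) * Real.log (51 / τ ^ 2)) := by
  have hbase : 0 < 12 * (k : ℝ) / τ := by positivity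
  have hlog_nonneg : 0 ≤ Real.log (51 / τ ^ 2) :=
    Real.log_nonneg (by rw [le_div_iff₀ (by positivity)]; nlinarith)
  have hbase_le : 12 * (k : ℝ) / τ ≤ (51 / τ ^ 2) ^ 2 := by
    rw [div_pow, div_le_div_iff₀ hτ0 (by positivity)]
    have hkτ : (k : ℝ) * τ ^ 2 ≤ 5 := (le_div_iff₀ (by positivity)).1 hk
    have : τ ^ 2 ≤ 1 := by nlinarith
    nlinarith [mul_le_mul_of_nonneg_right hkτ (by positivity : (0 : ℝ) ≤ 12 * τ ^ 2)]
  have hlog_base : Real.log (12 * k / τ) ≤ 2 * Real.log (51 / τ ^ 2) :=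
    calc Real.log (12 * k / τ) ≤ Real.log ((51 / τ ^ 2) ^ 2) := Real.log_le_log hbase hbase_le
      _ = 2 * Real.log (51 / τ ^ 2) := by rw [Real.log_pow]; norm_num
  rw [← Real.exp_log (pow_pos hbase _), Real.log_pow, Real.exp_le_exp]
  push_cast
  calc 2 * k * N * Real.log (12 * k / τ) ≤ 2 * k * N * (2 * Real.log (51 / τ ^ 2)) := by gcongr
    _ ≤ 2 * (5 / τ ^ 2) * N * (2 * Real.log (51 / τ ^ 2)) := by gcongr
    _ ≤ 34 * (N / τ ^ 2) * Real.log (51 / τ ^ 2) := by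
        rw [show 2 * (5 / τ ^ 2) * N * (2 * Real.log (51 / τ ^ 2)) =
          20 * (N / τ ^ 2) * Real.log (51 / τ ^ 2) by ring]
        gcongr
        norm_num

theorem stmt_11 (N : ℕ) (τ : ℝ) (hτ : τ ∈ Set.Ioo (0:ℝ) 1) :
    ∃ W : Finset (Matrix (Fin N) (Fin N) ℝ),
      (W.card : ℝ) ≤ Real.exp (34 * (N / τ ^ 2) * Real.log (51 / τ ^ 2)) ∧
      ∀ M : Matrix (Fin N) (Fin N) ℝ, (∀ i j, M i j ∈ Set.Icc (0:ℝ) 1) →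
        ∃ A ∈ W, ‖Matrix.toEuclideanCLM (𝕜 := ℝ) (M - A)‖ ≤ N * τ := by
  obtain ⟨hτ0, hτ1⟩ := hτ
  set k := ⌈4 / τ ^ 2⌉₊
  have hk0 : 0 < k := Nat.ceil_pos.2 (by positivity)
  have hkτ : 4 ≤ k * τ ^ 2 := (div_le_iff₀ (by positivity)).1 (Nat.le_ceil _)
  set δ := τ / (4 * k)
  have hδ1 : δ ≤ 1 := by
    rw [div_le_one (by positivity)]
    linarith [(Nat.one_le_cast (α := ℝ)).2 hk0]
  obtain ⟨s, hs_norm, hs_card, hs_net⟩ :=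
    exists_finset_net_unitBall (E := EuclideanSpace ℝ (Fin N)) (by positivity) hδ1
  let approx (p : (Fin k → EuclideanSpace ℝ (Fin N)) × (Fin k → EuclideanSpace ℝ (Fin N))) :
      Matrix (Fin N) (Fin N) ℝ :=
    (Matrix.toEuclideanCLM (𝕜 := ℝ) (n := Fin N)).symm (∑ i, rankOne ℝ ((N : ℝ) • p.1 i) (p.2 i))
  refine ⟨(Fintype.piFinset (fun _ => s) ×ˢ Fintype.piFinset fun _ => s).image approx, ?_,
    fun M hM => ?_⟩
  · calc _ ≤ (s.card : ℝ) ^ (2 * k) := by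
          exact_mod_cast (card_image_piFinset_prod_le s approx).trans_eq (by rw [Fintype.card_fin])
      _ ≤ ((3 / δ) ^ N) ^ (2 * k) := by gcongr; simpa using hs_card
      _ = (12 * k / τ) ^ (2 * k * N) := by
          rw [← pow_mul, mul_comm N, show 3 / δ = 12 * k / τ by rw [div_div_eq_mul_div]; ring]
      _ ≤ _ := pow_le_exp_mul_log_div_sq hτ0 hτ1 hk0 (ceil_four_div_sq_le hτ0 hτ1)
  have hHS := hilbertSchmidtNormSq_toEuclideanCLM_le (M := M)
    fun i j => abs_le.2 ⟨by linarith [(hM i j).1], (hM i j).2⟩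
  rw [Fintype.card_fin] at hHS
  obtain ⟨a, b, ha, hb, hab⟩ := exists_mem_net_norm_sub_sum_rankOne_le hs_norm hs_net hs_net hHS
    N.cast_nonneg hk0 (ε := N * τ / 2) (by nlinarith [sq_nonneg (N : ℝ)]) (by positivity)
  refine ⟨approx (a, b), Finset.mem_image_of_mem _
    (Finset.mem_product.2 ⟨Fintype.mem_piFinset.2 ha, Fintype.mem_piFinset.2 hb⟩), ?_⟩
  rw [map_sub, StarAlgEquiv.apply_symm_apply]
  calc _ ≤ N * τ / 2 + 2 * k * N * δ := hab
    _ = N * τ := by simp only [δ]; field_simp; ring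
end

section
/- With T as the homomorphism counting function of a graph H with m = |E| edges, if |{i,j,i',j'}| = 4 then ‖∂²T/∂x_{ij}∂x_{i'j'}‖_∞ ≤ 4m(m-1)N^{-2}, and if |{i,j,i',j'}| ∈ {2,3} then ‖∂²T/∂x_{ij}∂x_{i'j'}‖_∞ ≤ 4m(m-1)N^{-1}. -/
/-!
`T` is `N^{-(k-2)}` times a sum over all maps `q : [k] → [N]` of the product of the edge weights
`x_{q(l) q(l')}`, each a coordinate of `x` or `0`. Differentiating in `x_{ij}` and then in
`x_{i'j'}` keeps, for each `q`, the ordered pairs of distinct edges `(e, e')` with `q` mapping `e`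
onto `{i, j}` and `e'` onto `{i', j'}`, each weighted by a product of the remaining weights, which
lies in `[0, 1]`. For a fixed pair, such a `q` is pinned down on the endpoints of `e` and `e'` up
to the two orientations, so there are at most `4 N^{k - s}` of them, `s` the number of endpoints.
Two distinct edges have `s ≥ 3`, and `s = 4` when `{i, j}` and `{i', j'}` are disjoint because `q`
maps the endpoints onto `{i, j, i', j'}`. Summing over the `m (m - 1)` pairs gives the bounds.
-/

open Finset

lemma pow_sub_le_pow_sub_two_div {x : ℝ} (hx : 1 ≤ x) {k s r : ℕ} (hrs : r + 2 ≤ s)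
    (hsk : s ≤ k) : x ^ (k - s) ≤ x ^ (k - 2) / x ^ r := by
  rw [le_div_iff₀ (by positivity)]
  calc x ^ (k - s) * x ^ r ≤ x ^ (k - s) * x ^ (s - 2) := by gcongr; omega
    _ = x ^ (k - 2) := by rw [← pow_add]; congr 1; omega

lemma sum_sum_erase_le {ι : Type*} [DecidableEq ι] (s : Finset ι) (f : ι → ι → ℝ)
    {B : ℝ} (hf : ∀ i ∈ s, ∀ j ∈ s.erase i, f i j ≤ B) :
    ∑ i ∈ s, ∑ j ∈ s.erase i, f i j ≤ #s * (#s - 1) * B := by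
  calc ∑ i ∈ s, ∑ j ∈ s.erase i, f i j ≤ ∑ i ∈ s, (#s - 1) * B := by
        refine sum_le_sum fun i hi => ?_
        have hcard : ((#(s.erase i) : ℕ) : ℝ) = #s - 1 := by
          rw [card_erase_of_mem hi, Nat.cast_sub (card_pos.2 ⟨i, hi⟩), Nat.cast_one]
        simpa [hcard] using sum_le_card_nsmul _ _ _ (hf i hi)
    _ = #s * (#s - 1) * B := by rw [sum_const, nsmul_eq_mul, mul_assoc]

section ProductsOfFunctionals

variable {κ ι E : Type*} [DecidableEq ι] [NormedAddCommGroup E] [NormedSpace ℝ E]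
  (a : ℝ) (Q : Finset κ) (s : Finset ι) (L : κ → ι → E →L[ℝ] ℝ)

lemma fderiv_const_mul_sum_prod_apply (z v : E) :
    fderiv ℝ (fun x => a * ∑ q ∈ Q, ∏ e ∈ s, L q e x) z v =
      a * ∑ q ∈ Q, ∑ e ∈ s, (∏ e' ∈ s.erase e, L q e' z) * L q e v := by
  rw [((HasFDerivAt.fun_sum fun q _ =>
    HasFDerivAt.finsetProd fun e _ => (L q e).hasFDerivAt).const_mul a).fderiv]
  simp

lemma fderiv_fderiv_const_mul_sum_prod_apply (v w y : E) :
    fderiv ℝ (fun z => fderiv ℝ (fun x => a * ∑ q ∈ Q, ∏ e ∈ s, L q e x) z v) y w =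
      a * ∑ q ∈ Q, ∑ e ∈ s, ∑ e' ∈ s.erase e,
        L q e v * L q e' w * ∏ e'' ∈ (s.erase e).erase e', L q e'' y := by
  simp_rw [fderiv_const_mul_sum_prod_apply]
  rw [((HasFDerivAt.fun_sum fun q _ => HasFDerivAt.fun_sum fun e _ =>
    (HasFDerivAt.finsetProd fun e' _ => (L q e').hasFDerivAt).mul_const _).const_mul a).fderiv]
  simp [Finset.mul_sum, mul_assoc, mul_comm (∏ _ ∈ _, _)]

end ProductsOfFunctionals

section Edges

variable {α β : Type*}

def MapsEdgeOnto (q : α → β) (e : α × α) (a b : β) : Prop :=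
  (q e.1 = a ∧ q e.2 = b) ∨ (q e.1 = b ∧ q e.2 = a)

instance [DecidableEq β] (q : α → β) (e : α × α) (a b : β) :
    Decidable (MapsEdgeOnto q e a b) :=
  inferInstanceAs (Decidable (_ ∨ _))

lemma MapsEdgeOnto.eq_of_fst_eq_iff {q q' : α → β} {e : α × α} {a b : β}
    (h : MapsEdgeOnto q e a b) (h' : MapsEdgeOnto q' e a b) (hab : a ≠ b)
    (hfst : q e.1 = a ↔ q' e.1 = a) : q e.1 = q' e.1 ∧ q e.2 = q' e.2 := by
  unfold MapsEdgeOnto at h h'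
  grind

lemma card_le_card_endpoints [DecidableEq α] [DecidableEq β] {q : α → β} {e e' : α × α}
    {a b a' b' : β} (h : MapsEdgeOnto q e a b) (h' : MapsEdgeOnto q e' a' b') :
    #{a, b, a', b'} ≤ #{e.1, e.2, e'.1, e'.2} := by
  have himage : ({e.1, e.2, e'.1, e'.2} : Finset α).image q = {a, b, a', b'} := by
    unfold MapsEdgeOnto at h h'
    ext x
    simp only [mem_image, mem_insert, mem_singleton]
    grind
  exact himage ▸ card_image_le

lemma three_le_card_endpoints [LinearOrder α] {e e' : α × α} (he : e.1 < e.2)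
    (he' : e'.1 < e'.2) (hne : e ≠ e') : 3 ≤ #{e.1, e.2, e'.1, e'.2} := by
  refine two_lt_card.2 ?_
  by_cases h : e'.1 = e.1 ∨ e'.1 = e.2
  · refine ⟨e.1, by simp, e.2, by simp, e'.2, by simp, he.ne, ?_, ?_⟩ <;>
      rintro h₂ <;> apply hne <;> grind
  · refine ⟨e.1, by simp, e.2, by simp, e'.1, by simp, he.ne, ?_, ?_⟩ <;> grind

section Counting

variable [Fintype α] [DecidableEq α] [Fintype β] [DecidableEq β]

lemma card_filter_mapsEdgeOnto_le (e e' : α × α) {a b a' b' : β} (hab : a ≠ b)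
    (hab' : a' ≠ b') :
    #{q : α → β | MapsEdgeOnto q e a b ∧ MapsEdgeOnto q e' a' b'} ≤
      4 * Fintype.card β ^ (Fintype.card α - #{e.1, e.2, e'.1, e'.2}) := by
  set S : Finset α := {e.1, e.2, e'.1, e'.2}
  -- such a map is determined by the orientations of `e` and `e'` and by its values off `S`
  let code (q : α → β) : Bool × Bool × ({l // l ∉ S} → β) :=
    (decide (q e.1 = a), decide (q e'.1 = a'), fun l => q l)
  have hinj : Set.InjOn code {q | MapsEdgeOnto q e a b ∧ MapsEdgeOnto q e' a' b'} := by
    intro q hq q' hq' hcode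
    simp only [code, Prod.mk.injEq, decide_eq_decide] at hcode
    obtain ⟨h₁, h₂⟩ := hq.1.eq_of_fst_eq_iff hq'.1 hab hcode.1
    obtain ⟨h₃, h₄⟩ := hq.2.eq_of_fst_eq_iff hq'.2 hab' hcode.2.1
    funext l
    by_cases hl : l ∈ S
    · simp only [S, mem_insert, mem_singleton] at hl
      rcases hl with rfl | rfl | rfl | rfl <;> assumption
    · exact congrFun hcode.2.2 ⟨l, hl⟩
  calc _ ≤ #(univ : Finset (Bool × Bool × ({l // l ∉ S} → β))) :=
        card_le_card_of_injOn code (fun _ _ => mem_univ _) (by simpa using hinj)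
    _ = _ := by
      simp only [card_univ, Fintype.card_prod, Fintype.card_bool, Fintype.card_pi, prod_const,
        Fintype.card_subtype_compl, Fintype.card_coe]
      ring

lemma card_filter_mapsEdgeOnto_le_div (e e' : α × α) {a b a' b' : β} (hab : a ≠ b)
    (hab' : a' ≠ b') (r : ℕ)
    (hr : ∀ q : α → β, MapsEdgeOnto q e a b → MapsEdgeOnto q e' a' b' →
      r + 2 ≤ #{e.1, e.2, e'.1, e'.2}) :
    (#{q : α → β | MapsEdgeOnto q e a b ∧ MapsEdgeOnto q e' a' b'} : ℝ) ≤
      4 * (Fintype.card β : ℝ) ^ (Fintype.card α - 2) / (Fintype.card β : ℝ) ^ r := by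
  obtain hempty | ⟨q, hq⟩ := eq_empty_or_nonempty
    {q : α → β | MapsEdgeOnto q e a b ∧ MapsEdgeOnto q e' a' b'}
  · rw [hempty, card_empty, Nat.cast_zero]
    positivity
  have hβ : (1 : ℝ) ≤ Fintype.card β := by exact_mod_cast Fintype.card_pos_iff.2 ⟨a⟩
  rw [mem_filter] at hq
  calc _ ≤ (4 * Fintype.card β ^ (Fintype.card α - #{e.1, e.2, e'.1, e'.2}) : ℝ) := by
        exact_mod_cast card_filter_mapsEdgeOnto_le e e' hab hab'
    _ ≤ _ := by
      rw [mul_div_assoc]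
      gcongr
      exact pow_sub_le_pow_sub_two_div hβ (hr q hq.2.1 hq.2.2) (card_le_univ _)

end Counting

variable [LinearOrder β]

def edgeWeight (q : α → β) (e : α × α) : (β × β → ℝ) →L[ℝ] ℝ :=
  if q e.1 = q e.2 then 0
  else if q e.1 < q e.2 then ContinuousLinearMap.proj (q e.1, q e.2)
  else ContinuousLinearMap.proj (q e.2, q e.1)

lemma edgeWeight_apply (q : α → β) (e : α × α) (y : β × β → ℝ) :
    edgeWeight q e y = if q e.1 = q e.2 then 0
      else if q e.1 < q e.2 then y (q e.1, q e.2) else y (q e.2, q e.1) := by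
  unfold edgeWeight; split_ifs <;> rfl

lemma edgeWeight_mem_Icc (q : α → β) (e : α × α) {y : β × β → ℝ}
    (hy : ∀ c, y c ∈ Set.Icc (0 : ℝ) 1) : edgeWeight q e y ∈ Set.Icc (0 : ℝ) 1 := by
  rw [edgeWeight_apply]
  split_ifs
  · exact ⟨le_rfl, zero_le_one⟩
  · exact hy _
  · exact hy _

lemma edgeWeight_single (q : α → β) (e : α × α) {a b : β} (hab : a < b) :
    edgeWeight q e (Pi.single (a, b) 1) = if MapsEdgeOnto q e a b then 1 else 0 := by
  rw [edgeWeight_apply]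
  split_ifs <;> grind [MapsEdgeOnto]

lemma abs_edgeWeight_single_mul_le (q : α → β) (e e' : α × α) (s : Finset (α × α))
    {y : β × β → ℝ} (hy : ∀ c, y c ∈ Set.Icc (0 : ℝ) 1) {a b a' b' : β} (hab : a < b)
    (hab' : a' < b') :
    |edgeWeight q e (Pi.single (a, b) 1) * edgeWeight q e' (Pi.single (a', b') 1) *
        ∏ e'' ∈ s, edgeWeight q e'' y| ≤
      if MapsEdgeOnto q e a b ∧ MapsEdgeOnto q e' a' b' then 1 else 0 := by
  have hprod : |∏ e'' ∈ s, edgeWeight q e'' y| ≤ 1 := by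
    rw [abs_prod]
    refine prod_le_one (fun _ _ => abs_nonneg _) fun e'' _ => ?_
    obtain ⟨h₀, h₁⟩ := edgeWeight_mem_Icc q e'' hy
    rwa [abs_of_nonneg h₀]
  rw [edgeWeight_single q e hab, edgeWeight_single q e' hab']
  split_ifs <;> simp_all

variable [Fintype α] [DecidableEq α] [Fintype β]

noncomputable def scaledHomCount (E : Finset (α × α)) (x : β × β → ℝ) : ℝ :=
  ((Fintype.card β : ℝ) ^ (Fintype.card α - 2))⁻¹ *
    ∑ q : α → β, ∏ e ∈ E, edgeWeight q e x

lemma abs_fderiv_fderiv_scaledHomCount_le (E : Finset (α × α)) {y : β × β → ℝ}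
    (hy : ∀ c, y c ∈ Set.Icc (0 : ℝ) 1) {i j i' j' : β} (hij : i < j) (hij' : i' < j')
    (r : ℕ) (hr : ∀ e ∈ E, ∀ e' ∈ E.erase e, ∀ q : α → β, MapsEdgeOnto q e i j →
      MapsEdgeOnto q e' i' j' → r + 2 ≤ #{e.1, e.2, e'.1, e'.2}) :
    |fderiv ℝ (fun z => fderiv ℝ (scaledHomCount E) z (Pi.single (i, j) 1)) y
        (Pi.single (i', j') 1)| ≤ 4 * #E * (#E - 1) / (Fintype.card β : ℝ) ^ r := by
  set c : ℝ := (Fintype.card β : ℝ) ^ (Fintype.card α - 2)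
  have hc : 0 < c := pow_pos (by exact_mod_cast Fintype.card_pos_iff.2 ⟨i⟩) _
  unfold scaledHomCount
  rw [fderiv_fderiv_const_mul_sum_prod_apply, abs_mul, abs_inv, abs_of_pos hc]
  calc c⁻¹ * |∑ q : α → β, ∑ e ∈ E, ∑ e' ∈ E.erase e, _|
      ≤ c⁻¹ * ∑ q : α → β, ∑ e ∈ E, ∑ e' ∈ E.erase e,
          if MapsEdgeOnto q e i j ∧ MapsEdgeOnto q e' i' j' then (1 : ℝ) else 0 := by
        gcongr
        refine (abs_sum_le_sum_abs _ _).trans <| sum_le_sum fun q _ =>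
          (abs_sum_le_sum_abs _ _).trans <| sum_le_sum fun e _ =>
          (abs_sum_le_sum_abs _ _).trans <| sum_le_sum fun e' _ => ?_
        exact abs_edgeWeight_single_mul_le q e e' _ hy hij hij'
    _ = c⁻¹ * ∑ e ∈ E, ∑ e' ∈ E.erase e,
          (#{q : α → β | MapsEdgeOnto q e i j ∧ MapsEdgeOnto q e' i' j'} : ℝ) := by
        rw [sum_comm]
        simp_rw [sum_comm (s := univ), sum_boole]
    _ ≤ c⁻¹ * (#E * (#E - 1) * (4 * c / (Fintype.card β : ℝ) ^ r)) := by
        gcongr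
        refine sum_sum_erase_le E _ fun e he e' he' => ?_
        exact card_filter_mapsEdgeOnto_le_div e e' hij.ne hij'.ne r (hr e he e' he')
    _ = 4 * #E * (#E - 1) / (Fintype.card β : ℝ) ^ r := by
        field_simp

end Edges

theorem stmt_14_general (N k : ℕ)
    (E : Finset (Fin k × Fin k)) (hE : ∀ e ∈ E, e.1 < e.2)
    (T : ((Fin N × Fin N) → ℝ) → ℝ)
    (hT : ∀ y, T y = (∑ q : Fin k → Fin N, ∏ e ∈ E,
        (if q e.1 = q e.2 then 0
         else if q e.1 < q e.2 then y (q e.1, q e.2) else y (q e.2, q e.1)))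
      / (N : ℝ) ^ (k - 2)) :
    ∀ y : (Fin N × Fin N) → ℝ, (∀ c, y c ∈ Set.Icc (0:ℝ) 1) →
      ∀ i j i' j' : Fin N, i < j → i' < j' →
        ((({i, j, i', j'} : Finset (Fin N)).card = 4 →
          |fderiv ℝ (fun z => fderiv ℝ T z (Pi.single (i, j) 1)) y
              (Pi.single (i', j') 1)|
            ≤ 4 * E.card * (E.card - 1) / (N : ℝ) ^ 2) ∧
        (({i, j, i', j'} : Finset (Fin N)).card = 2 ∨
            ({i, j, i', j'} : Finset (Fin N)).card = 3 →
          |fderiv ℝ (fun z => fderiv ℝ T z (Pi.single (i, j) 1)) y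
              (Pi.single (i', j') 1)|
            ≤ 4 * E.card * (E.card - 1) / (N : ℝ))) := by
  intro y hy i j i' j' hij hij'
  have hT' : T = scaledHomCount E := by
    funext x
    simp only [hT, scaledHomCount, edgeWeight_apply, Fintype.card_fin, div_eq_inv_mul]
  subst hT'
  have hbound := fun r => abs_fderiv_fderiv_scaledHomCount_le E hy hij hij' r
  simp only [Fintype.card_fin] at hbound
  constructor
  · intro h4
    refine hbound 2 fun e _ e' _ q hq hq' => ?_
    exact h4.ge.trans (card_le_card_endpoints hq hq')
  · intro _
    simpa using hbound 1 fun e he e' he' q _ _ =>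
      three_le_card_endpoints (hE e he) (hE e' (mem_of_mem_erase he')) (ne_of_mem_erase he').symm

theorem stmt_14 (N k : ℕ) (hk : 2 ≤ k)
    (E : Finset (Fin k × Fin k)) (hE : ∀ e ∈ E, e.1 < e.2)
    (T : ((Fin N × Fin N) → ℝ) → ℝ)
    (hT : ∀ y, T y = (∑ q : Fin k → Fin N, ∏ e ∈ E,
        (if q e.1 = q e.2 then 0
         else if q e.1 < q e.2 then y (q e.1, q e.2) else y (q e.2, q e.1)))
      / (N : ℝ) ^ (k - 2)) :
    ∀ y : (Fin N × Fin N) → ℝ, (∀ c, y c ∈ Set.Icc (0:ℝ) 1) →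
      ∀ i j i' j' : Fin N, i < j → i' < j' →
        ((({i, j, i', j'} : Finset (Fin N)).card = 4 →
          |fderiv ℝ (fun z => fderiv ℝ T z (Pi.single (i, j) 1)) y
              (Pi.single (i', j') 1)|
            ≤ 4 * E.card * (E.card - 1) / (N : ℝ) ^ 2) ∧
        (({i, j, i', j'} : Finset (Fin N)).card = 2 ∨
            ({i, j, i', j'} : Finset (Fin N)).card = 3 →
          |fderiv ℝ (fun z => fderiv ℝ T z (Pi.single (i, j) 1)) y
              (Pi.single (i', j') 1)|
            ≤ 4 * E.card * (E.card - 1) / (N : ℝ))) :=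
  stmt_14_general N k E hE T hT
end

section
/- Let A, B be sets of edges of the complete graph K_r on [r], and let e = {α,β} be an edge in neither A nor B. For x, y ∈ [0,1]^{n} (indexed by pairs from [N], symmetric, zero diagonal), define P(x,q,A) = ∏_{{a,b}∈A} x_{q_a q_b} for q ∈ [N]^r. Then |∑_{q∈[N]^r} P(x,q,A) P(y,q,B) (x_{q_α q_β} − y_{q_α q_β})| ≤ N^{r-1} ‖x−y‖_op, where ‖x−y‖_op is the operator norm of the symmetric matrix with entries x_{ij} − y_{ij}. -/
/-!
Fix every coordinate of `q` except `a = q α` and `b = q β`. No edge of `A` or `B` joins `α` and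
`β`, so each edge factor depends on at most one of `a`, `b`, and the product of all edge factors
is `u a * v b` with `u`, `v` valued in `[0, 1]`. The double sum over `a`, `b` is then
`⟪u, (X - Y) v⟫`, of absolute value at most `‖u‖ ‖v‖ ‖X - Y‖ ≤ N ‖X - Y‖`; there are `N ^ (r - 2)`
choices of the remaining coordinates.
-/

open Finset Matrix unitInterval

section EuclideanBound

variable {n : Type*} [Fintype n]

lemma norm_toLp_le_sqrt_card {u : n → ℝ} (hu : ∀ i, |u i| ≤ 1) :
    ‖(WithLp.toLp 2 u : EuclideanSpace ℝ n)‖ ≤ √(Fintype.card n) := by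
  rw [EuclideanSpace.norm_eq]
  refine Real.sqrt_le_sqrt ?_
  calc ∑ i, ‖u i‖ ^ 2 ≤ ∑ _i : n, (1 : ℝ) :=
        sum_le_sum fun i _ => pow_le_one₀ (norm_nonneg _) (hu i)
    _ = Fintype.card n := by simp

variable [DecidableEq n]

lemma abs_dotProduct_mulVec_le (M : Matrix n n ℝ) {u v : n → ℝ} (hu : ∀ i, |u i| ≤ 1)
    (hv : ∀ i, |v i| ≤ 1) :
    |u ⬝ᵥ M *ᵥ v| ≤ Fintype.card n * ‖toEuclideanCLM (𝕜 := ℝ) M‖ := by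
  rw [← inner_toEuclideanCLM M (WithLp.toLp 2 u) (WithLp.toLp 2 v)]
  calc _ ≤ ‖(WithLp.toLp 2 u : EuclideanSpace ℝ n)‖ *
          ‖toEuclideanCLM (𝕜 := ℝ) M (WithLp.toLp 2 v)‖ := abs_real_inner_le_norm _ _
    _ ≤ √(Fintype.card n) * (‖toEuclideanCLM (𝕜 := ℝ) M‖ * √(Fintype.card n)) :=
        mul_le_mul (norm_toLp_le_sqrt_card hu)
          ((ContinuousLinearMap.le_opNorm _ _).trans
            (mul_le_mul_of_nonneg_left (norm_toLp_le_sqrt_card hv) (norm_nonneg _)))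
          (norm_nonneg _) (Real.sqrt_nonneg _)
    _ = _ := by rw [mul_comm ‖_‖, ← mul_assoc, Real.mul_self_sqrt (Nat.cast_nonneg _)]

end EuclideanBound

def unitRankOne (κ : Type*) : Submonoid (κ → κ → ℝ) where
  carrier := {F | ∃ u v : κ → ℝ, (∀ a, u a ∈ I) ∧ (∀ b, v b ∈ I) ∧ ∀ a b, F a b = u a * v b}
  one_mem' := ⟨1, 1, fun _ => one_mem, fun _ => one_mem, fun _ _ => (one_mul 1).symm⟩
  mul_mem' := by
    rintro F G ⟨u, v, hu, hv, hF⟩ ⟨u', v', hu', hv', hG⟩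
    refine ⟨u * u', v * v', fun a => mul_mem (hu a) (hu' a), fun b => mul_mem (hv b) (hv' b),
      fun a b => ?_⟩
    simp only [Pi.mul_apply, hF, hG]
    ring

section UnitRankOne

variable {κ : Type*} {F : κ → κ → ℝ}

lemma mem_unitRankOne_of_forall_eq (hF : ∀ a b, F a b ∈ I)
    (h : (∀ a b b', F a b = F a b') ∨ ∀ a a' b, F a b = F a' b) : F ∈ unitRankOne κ := by
  rcases isEmpty_or_nonempty κ with hκ | ⟨⟨c⟩⟩
  · exact ⟨0, 0, isEmptyElim, isEmptyElim, isEmptyElim⟩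
  rcases h with h | h
  · exact ⟨fun a => F a c, 1, fun a => hF a c, fun _ => one_mem, fun a b => by simp [h a b c]⟩
  · exact ⟨1, fun b => F c b, fun _ => one_mem, fun b => hF c b, fun a b => by simp [h a c b]⟩

lemma abs_sum_sum_mul_le [Fintype κ] [DecidableEq κ] (M : Matrix κ κ ℝ)
    (hF : F ∈ unitRankOne κ) :
    |∑ a, ∑ b, F a b * M a b| ≤ Fintype.card κ * ‖toEuclideanCLM (𝕜 := ℝ) M‖ := by
  obtain ⟨u, v, hu, hv, hF⟩ := hF
  have abs_le_one {x : ℝ} (hx : x ∈ I) : |x| ≤ 1 := abs_le.2 ⟨by linarith [hx.1], hx.2⟩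
  convert abs_dotProduct_mulVec_le M (fun a => abs_le_one (hu a)) (fun b => abs_le_one (hv b))
    using 2
  simp only [dotProduct, mulVec, hF, mul_sum]
  exact sum_congr rfl fun a _ => sum_congr rfl fun b _ => by ring

end UnitRankOne

section JoinPair

variable {ι κ : Type*} [DecidableEq ι] {α β : ι}

def joinPair (f : {j // j ≠ α ∧ j ≠ β} → κ) (a b : κ) (j : ι) : κ :=
  if h : j = α then a else if h' : j = β then b else f ⟨j, h, h'⟩

@[simp]
lemma joinPair_left (f : {j // j ≠ α ∧ j ≠ β} → κ) (a b : κ) : joinPair f a b α = a := by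
  simp [joinPair]

@[simp]
lemma joinPair_right (h : α ≠ β) (f : {j // j ≠ α ∧ j ≠ β} → κ) (a b : κ) :
    joinPair f a b β = b := by
  simp [joinPair, h.symm]

lemma joinPair_congr_left (f : {j // j ≠ α ∧ j ≠ β} → κ) (a a' b : κ) {j : ι} (hj : j ≠ α) :
    joinPair f a b j = joinPair f a' b j := by
  simp [joinPair, hj]

lemma joinPair_congr_right (f : {j // j ≠ α ∧ j ≠ β} → κ) (a b b' : κ) {j : ι} (hj : j ≠ β) :
    joinPair f a b j = joinPair f a b' j := by
  simp [joinPair, hj]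

def splitPairEquiv (h : α ≠ β) : (ι → κ) ≃ ({j // j ≠ α ∧ j ≠ β} → κ) × κ × κ where
  toFun q := (fun j => q j, q α, q β)
  invFun p := joinPair p.1 p.2.1 p.2.2
  left_inv q := by
    funext j
    by_cases hα : j = α
    · subst hα; simp
    by_cases hβ : j = β
    · subst hβ; simp [h]
    · simp [joinPair, hα, hβ]
  right_inv := fun ⟨f, a, b⟩ => by
    ext j
    · simp [joinPair, j.2.1, j.2.2]
    · simp
    · simp [h]

lemma sum_eq_sum_joinPair [Fintype ι] [Fintype κ] {M : Type*} [AddCommMonoid M] (h : α ≠ β)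
    (g : (ι → κ) → M) :
    ∑ q, g q = ∑ f : {j // j ≠ α ∧ j ≠ β} → κ, ∑ a, ∑ b, g (joinPair f a b) := by
  rw [← (splitPairEquiv h).symm.sum_comp, Fintype.sum_prod_type]
  simp only [Fintype.sum_prod_type]
  rfl

lemma card_ne_and_ne [Fintype ι] (h : α ≠ β) :
    Fintype.card {j // j ≠ α ∧ j ≠ β} = Fintype.card ι - 2 := by
  rw [Fintype.card_subtype, ← card_pair h, ← card_univ, ← card_sdiff_of_subset (subset_univ _)]
  congr 1
  ext
  simp

end JoinPair

section EdgeProducts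

variable {ι κ : Type*} [DecidableEq ι] {α β : ι}

lemma edgeKernel_mem_unitRankOne (hαβ : α ≠ β) {X : Matrix κ κ ℝ} (hX : ∀ i j, X i j ∈ I)
    (f : {j // j ≠ α ∧ j ≠ β} → κ) {i j : ι} (hij : (i, j) ≠ (α, β)) (hji : (i, j) ≠ (β, α)) :
    (fun a b => X (joinPair f a b i) (joinPair f a b j)) ∈ unitRankOne κ := by
  refine mem_unitRankOne_of_forall_eq (fun _ _ => hX _ _) ?_
  by_cases hβ : i ≠ β ∧ j ≠ β
  · left
    intro a b b'
    rw [joinPair_congr_right f a b b' hβ.1, joinPair_congr_right f a b b' hβ.2]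
  · have hα : i ≠ α ∧ j ≠ α := by grind
    right
    intro a a' b
    rw [joinPair_congr_left f a a' b hα.1, joinPair_congr_left f a a' b hα.2]

theorem abs_sum_prod_edges_mul_sub_le [Fintype ι] [Fintype κ] [DecidableEq κ]
    (X Y : Matrix κ κ ℝ) (hX : ∀ i j, X i j ∈ I) (hY : ∀ i j, Y i j ∈ I) (A B : Finset (ι × ι))
    (hαβ : α ≠ β) (hA : ∀ e ∈ A, e ≠ (α, β) ∧ e ≠ (β, α))
    (hB : ∀ e ∈ B, e ≠ (α, β) ∧ e ≠ (β, α)) :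
    |∑ q : ι → κ,
        (∏ e ∈ A, X (q e.1) (q e.2)) * (∏ e ∈ B, Y (q e.1) (q e.2)) *
          (X (q α) (q β) - Y (q α) (q β))|
      ≤ (Fintype.card κ : ℝ) ^ (Fintype.card ι - 1) * ‖toEuclideanCLM (𝕜 := ℝ) (X - Y)‖ := by
  set F : ({j // j ≠ α ∧ j ≠ β} → κ) → κ → κ → ℝ := fun f =>
    (∏ e ∈ A, fun a b => X (joinPair f a b e.1) (joinPair f a b e.2)) *
      ∏ e ∈ B, fun a b => Y (joinPair f a b e.1) (joinPair f a b e.2)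
  have hF : ∀ f, F f ∈ unitRankOne κ := fun f =>
    mul_mem
      (prod_mem fun e he => edgeKernel_mem_unitRankOne hαβ hX f (hA e he).1 (hA e he).2)
      (prod_mem fun e he => edgeKernel_mem_unitRankOne hαβ hY f (hB e he).1 (hB e he).2)
  have hcard : 2 ≤ Fintype.card ι := Fintype.one_lt_card_iff.2 ⟨α, β, hαβ⟩
  rw [sum_eq_sum_joinPair hαβ]
  calc _ = |∑ f, ∑ a, ∑ b, F f a b * (X - Y) a b| := by
          simp [F, Finset.prod_apply, hαβ]
    _ ≤ ∑ f : {j // j ≠ α ∧ j ≠ β} → κ, |∑ a, ∑ b, F f a b * (X - Y) a b| :=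
        abs_sum_le_sum_abs _ _
    _ ≤ ∑ f : {j // j ≠ α ∧ j ≠ β} → κ, Fintype.card κ * ‖toEuclideanCLM (𝕜 := ℝ) (X - Y)‖ :=
        sum_le_sum fun f _ => abs_sum_sum_mul_le _ (hF f)
    _ = _ := by
        rw [sum_const, card_univ, Fintype.card_fun, card_ne_and_ne hαβ, nsmul_eq_mul, ← mul_assoc]
        push_cast
        rw [← pow_succ, show Fintype.card ι - 2 + 1 = Fintype.card ι - 1 by omega]

end EdgeProducts

theorem stmt_15_general (N r : ℕ)
    (X Y : Matrix (Fin N) (Fin N) ℝ)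
    (hX : ∀ i j, X i j ∈ Set.Icc (0:ℝ) 1) (hY : ∀ i j, Y i j ∈ Set.Icc (0:ℝ) 1)
    (A B : Finset (Fin r × Fin r))
    (hA : ∀ e ∈ A, e.1 < e.2) (hB : ∀ e ∈ B, e.1 < e.2)
    (α β : Fin r) (hαβ : α < β) (heA : (α, β) ∉ A) (heB : (α, β) ∉ B) :
    |∑ q : Fin r → Fin N,
        (∏ e ∈ A, X (q e.1) (q e.2)) * (∏ e ∈ B, Y (q e.1) (q e.2)) *
          (X (q α) (q β) - Y (q α) (q β))|
      ≤ (N : ℝ) ^ (r - 1) * ‖Matrix.toEuclideanCLM (𝕜 := ℝ) (X - Y)‖ := by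
  have avoids_pair (E : Finset (Fin r × Fin r)) (hE : ∀ e ∈ E, e.1 < e.2) (hαβE : (α, β) ∉ E) :
      ∀ e ∈ E, e ≠ (α, β) ∧ e ≠ (β, α) := by
    rintro e he
    refine ⟨ne_of_mem_of_not_mem he hαβE, ?_⟩
    rintro rfl
    exact (hE _ he).asymm hαβ
  simpa using abs_sum_prod_edges_mul_sub_le X Y hX hY A B hαβ.ne (avoids_pair A hA heA)
    (avoids_pair B hB heB)

theorem stmt_15 (N r : ℕ)
    (X Y : Matrix (Fin N) (Fin N) ℝ)
    (hXs : X.IsSymm) (hYs : Y.IsSymm)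
    (hXd : ∀ i, X i i = 0) (hYd : ∀ i, Y i i = 0)
    (hX : ∀ i j, X i j ∈ Set.Icc (0:ℝ) 1) (hY : ∀ i j, Y i j ∈ Set.Icc (0:ℝ) 1)
    (A B : Finset (Fin r × Fin r))
    (hA : ∀ e ∈ A, e.1 < e.2) (hB : ∀ e ∈ B, e.1 < e.2)
    (α β : Fin r) (hαβ : α < β) (heA : (α, β) ∉ A) (heB : (α, β) ∉ B) :
    |∑ q : Fin r → Fin N,
        (∏ e ∈ A, X (q e.1) (q e.2)) * (∏ e ∈ B, Y (q e.1) (q e.2)) *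
          (X (q α) (q β) - Y (q α) (q β))|
      ≤ (N : ℝ) ^ (r - 1) * ‖Matrix.toEuclideanCLM (𝕜 := ℝ) (X - Y)‖ :=
  stmt_15_general N r X Y hX hY A B hA hB α β hαβ heA heB
end

section
/- Define φ_p(t) := inf{ I_p(x) : x ∈ [0,1]^n, T(x) ≥ tn } where T is the homomorphism counting function of a graph H with m edges, n = N(N-1)/2, I_p(x) = ∑_{i<j} (x_{ij} log(x_{ij}/p) + (1-x_{ij}) log((1-x_{ij})/(1-p))). Let t_0 = T(𝟙)/n, where 𝟙 is the all-ones vector. Then for any 0 < δ < t < t_0, φ_p(t−δ) ≥ φ_p(t) − (δ/(t_0−t))^{1/m} · n log(1/p). -/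
/-!
Given x feasible at level t - δ, move it towards the all-ones matrix 𝟙, y = (1 - β) x + β 𝟙.
Since 0 ≤ x ≤ 𝟙 entrywise, the product over the m edges of H obeys
∏ y ≥ (1 - βᵐ) ∏ x + βᵐ ∏ 𝟙, so T y ≥ (1 - βᵐ) T x + βᵐ t₀ n, and βᵐ = δ / (t₀ - t) lifts the
level to t. Convexity of I_p gives I_p y ≤ (1 - β) I_p x + β I_p 𝟙 ≤ I_p x + β n log (1/p),
as I_p ≥ 0. When δ > t₀ - t one takes β = 1 instead.
-/

open Finset Real

noncomputable section

theorem one_sub_pow_mul_prod_add_pow_mul_prod_le {ι : Type*} (s : Finset ι) {a c : ι → ℝ}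
    {b : ℝ} (ha : ∀ i ∈ s, 0 ≤ a i) (hac : ∀ i ∈ s, a i ≤ c i) (hb₀ : 0 ≤ b)
    (hb₁ : b ≤ 1) :
    (1 - b ^ #s) * ∏ i ∈ s, a i + b ^ #s * ∏ i ∈ s, c i
      ≤ ∏ i ∈ s, ((1 - b) * a i + b * c i) := by
  induction s using Finset.cons_induction with
  | empty => simp
  | cons j s hj ih =>
    rw [forall_mem_cons] at ha hac
    obtain ⟨haj, ha⟩ := ha
    obtain ⟨hacj, hac⟩ := hac
    set P := ∏ i ∈ s, a i
    set Q := ∏ i ∈ s, c i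
    have hP : 0 ≤ P := prod_nonneg ha
    have hPQ : P ≤ Q := prod_le_prod ha hac
    have hbm : b ^ #s ≤ 1 := pow_le_one₀ hb₀ hb₁
    rw [prod_cons, prod_cons, prod_cons, card_cons, pow_succ]
    calc (1 - b ^ #s * b) * (a j * P) + b ^ #s * b * (c j * Q)
        ≤ ((1 - b) * a j + b * c j) * ((1 - b ^ #s) * P + b ^ #s * Q) := by
          -- the gap is (1 - b) bᵐ aⱼ (Q - P) + b (1 - bᵐ) P (cⱼ - aⱼ)
          nlinarith [mul_nonneg (mul_nonneg (mul_nonneg (sub_nonneg.2 hb₁) (pow_nonneg hb₀ #s))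
              haj) (sub_nonneg.2 hPQ),
            mul_nonneg (mul_nonneg (mul_nonneg hb₀ (sub_nonneg.2 hbm)) hP) (sub_nonneg.2 hacj)]
      _ ≤ ((1 - b) * a j + b * c j) * ∏ i ∈ s, ((1 - b) * a i + b * c i) :=
          mul_le_mul_of_nonneg_left (ih ha hac) (by nlinarith)

theorem card_filter_fst_lt_snd (N : ℕ) :
    #(univ.filter fun c : Fin N × Fin N => c.1 < c.2) = N.choose 2 := by
  rw [Nat.choose_two_right, ← sum_range_id, ← sum_range_reflect, ← Fin.sum_univ_eq_sum_range,
    card_filter, Fintype.sum_prod_type]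
  refine sum_congr rfl fun i _ => ?_
  simp [filter_lt_eq_Ioi]

theorem sub_le_mul_log_div {a c : ℝ} (ha : 0 ≤ a) (hc : 0 < c) : a - c ≤ a * log (a / c) := by
  rcases ha.eq_or_lt with rfl | ha
  · simpa using hc.le
  · have h := one_sub_inv_le_log_of_pos (div_pos ha hc)
    rw [inv_div] at h
    calc a - c = a * (1 - c / a) := by field_simp
      _ ≤ a * log (a / c) := mul_le_mul_of_nonneg_left h ha.le

theorem mul_log_div_eq_sub (a : ℝ) {c : ℝ} (hc : c ≠ 0) :
    a * log (a / c) = a * log a - a * log c := by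
  rcases eq_or_ne a 0 with rfl | ha
  · simp
  · rw [log_div ha hc, mul_sub]

theorem min_rpow_one_div_pow {x : ℝ} (hx : 0 ≤ x) {m : ℕ} (hm : m ≠ 0) :
    min (x ^ ((1 : ℝ) / m)) 1 ^ m = min x 1 := by
  have hm' : (0 : ℝ) ≤ 1 / m := by positivity
  rcases le_total x 1 with h | h
  · rw [min_eq_left (rpow_le_one hx h hm'), min_eq_left h, one_div,
      rpow_inv_natCast_pow hx hm]
  · rw [min_eq_right (one_le_rpow h hm'), min_eq_right h, one_pow]

theorem le_one_sub_min_div_mul_add_min_div_mul {t t₀ δ : ℝ} (hδ : 0 ≤ δ) (ht : t < t₀) :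
    t ≤ (1 - min (δ / (t₀ - t)) 1) * (t - δ) + min (δ / (t₀ - t)) 1 * t₀ := by
  have hgap : 0 < t₀ - t := sub_pos.2 ht
  rcases le_total (δ / (t₀ - t)) 1 with h | h
  · rw [min_eq_left h]
    have hq : δ / (t₀ - t) * (t₀ - t) = δ := div_mul_cancel₀ δ hgap.ne'
    nlinarith [div_nonneg hδ hgap.le]
  · rw [min_eq_right h]
    linarith

theorem csInf_image_le_csInf_image_add {α : Type*} {f : α → ℝ} {A B : Set α} {C : ℝ}
    (hA : A.Nonempty) (hB : BddBelow (f '' B)) (h : ∀ x ∈ A, ∃ y ∈ B, f y ≤ f x + C) :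
    sInf (f '' B) ≤ sInf (f '' A) + C := by
  rw [← sub_le_iff_le_add]
  refine le_csInf (hA.image f) ?_
  rintro _ ⟨x, hx, rfl⟩
  obtain ⟨y, hy, hfy⟩ := h x hx
  linarith [csInf_le hB (Set.mem_image_of_mem f hy)]

def bernoulliKL (p x : ℝ) : ℝ := x * log (x / p) + (1 - x) * log ((1 - x) / (1 - p))

section BernoulliKL

variable {p : ℝ}

theorem bernoulliKL_nonneg (hp : p ∈ Set.Ioo 0 1) {x : ℝ} (hx : x ∈ Set.Icc 0 1) :
    0 ≤ bernoulliKL p x := by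
  have h₁ := sub_le_mul_log_div hx.1 hp.1
  have h₂ := sub_le_mul_log_div (sub_nonneg.2 hx.2) (sub_pos.2 hp.2)
  rw [bernoulliKL]
  linarith

theorem bernoulliKL_eq_neg_binEntropy_sub (hp : p ∈ Set.Ioo 0 1) (x : ℝ) :
    bernoulliKL p x = -binEntropy x - x * log p - (1 - x) * log (1 - p) := by
  rw [bernoulliKL, binEntropy, log_inv, log_inv, mul_log_div_eq_sub x hp.1.ne',
    mul_log_div_eq_sub (1 - x) (sub_ne_zero.2 hp.2.ne')]
  ring

theorem convexOn_bernoulliKL (hp : p ∈ Set.Ioo 0 1) :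
    ConvexOn ℝ (Set.Icc 0 1) (bernoulliKL p) := by
  refine ⟨convex_Icc 0 1, fun x hx y hy a b ha hb hab => ?_⟩
  have h := strictConcave_binEntropy.concaveOn.2 hx hy ha hb hab
  simp only [smul_eq_mul, bernoulliKL_eq_neg_binEntropy_sub hp] at h ⊢
  linear_combination h + log (1 - p) * hab

end BernoulliKL

section Matrices

variable {N k : ℕ}

def onesOffDiag (N : ℕ) : Matrix (Fin N) (Fin N) ℝ := fun i j => if i = j then 0 else 1

def homDensity (E : Finset (Fin k × Fin k)) (x : Matrix (Fin N) (Fin N) ℝ) : ℝ :=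
  (∑ q : Fin k → Fin N, ∏ e ∈ E, x (q e.1) (q e.2)) / (N : ℝ) ^ (k - 2)

def relEntropy (p : ℝ) (x : Matrix (Fin N) (Fin N) ℝ) : ℝ :=
  ∑ c ∈ univ.filter (fun c : Fin N × Fin N => c.1 < c.2), bernoulliKL p (x c.1 c.2)

def feasibleSet (T : Matrix (Fin N) (Fin N) ℝ → ℝ) (s : ℝ) :
    Set (Matrix (Fin N) (Fin N) ℝ) :=
  {x | x.IsSymm ∧ (∀ i, x i i = 0) ∧ (∀ i j, x i j ∈ Set.Icc (0 : ℝ) 1) ∧ T x ≥ s}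

theorem homDensity_convexComb_ge (E : Finset (Fin k × Fin k)) {x z : Matrix (Fin N) (Fin N) ℝ}
    {b : ℝ} (hx : ∀ i j, 0 ≤ x i j) (hxz : ∀ i j, x i j ≤ z i j) (hb₀ : 0 ≤ b) (hb₁ : b ≤ 1) :
    (1 - b ^ #E) * homDensity E x + b ^ #E * homDensity E z
      ≤ homDensity E ((1 - b) • x + b • z) := by
  simp only [homDensity, Matrix.add_apply, Matrix.smul_apply, smul_eq_mul, mul_div_assoc',
    ← add_div, mul_sum, ← sum_add_distrib]
  gcongr with q
  exact one_sub_pow_mul_prod_add_pow_mul_prod_le E (fun _ _ => hx _ _) (fun _ _ => hxz _ _)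
    hb₀ hb₁

theorem relEntropy_nonneg {p : ℝ} (hp : p ∈ Set.Ioo 0 1) {x : Matrix (Fin N) (Fin N) ℝ}
    (hx : ∀ i j, x i j ∈ Set.Icc (0 : ℝ) 1) : 0 ≤ relEntropy p x :=
  sum_nonneg fun _ _ => bernoulliKL_nonneg hp (hx _ _)

theorem relEntropy_convexComb_le {p : ℝ} (hp : p ∈ Set.Ioo 0 1)
    {x z : Matrix (Fin N) (Fin N) ℝ} {b : ℝ} (hx : ∀ i j, x i j ∈ Set.Icc (0 : ℝ) 1)
    (hz : ∀ i j, z i j ∈ Set.Icc (0 : ℝ) 1) (hb₀ : 0 ≤ b) (hb₁ : b ≤ 1) :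
    relEntropy p ((1 - b) • x + b • z) ≤ (1 - b) * relEntropy p x + b * relEntropy p z := by
  simp only [relEntropy, Matrix.add_apply, Matrix.smul_apply, smul_eq_mul, mul_sum,
    ← sum_add_distrib]
  gcongr with c
  exact (convexOn_bernoulliKL hp).2 (hx _ _) (hz _ _) (sub_nonneg.2 hb₁) hb₀ (by ring)

theorem relEntropy_onesOffDiag (p : ℝ) :
    relEntropy p (onesOffDiag N) = N * (N - 1) / 2 * log (1 / p) := by
  have hterm : ∀ c ∈ univ.filter (fun c : Fin N × Fin N => c.1 < c.2),
      bernoulliKL p (onesOffDiag N c.1 c.2) = log (1 / p) := fun c hc => by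
    simp [bernoulliKL, onesOffDiag, (mem_filter.1 hc).2.ne]
  rw [relEntropy, sum_congr rfl hterm, sum_const, nsmul_eq_mul, card_filter_fst_lt_snd,
    Nat.cast_choose_two]

theorem onesOffDiag_apply_mem_Icc (N : ℕ) (i j : Fin N) :
    onesOffDiag N i j ∈ Set.Icc (0 : ℝ) 1 := by
  unfold onesOffDiag
  split_ifs <;> simp

theorem onesOffDiag_mem_feasibleSet {T : Matrix (Fin N) (Fin N) ℝ → ℝ} {s : ℝ}
    (hs : s ≤ T (onesOffDiag N)) : onesOffDiag N ∈ feasibleSet T s :=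
  ⟨Matrix.IsSymm.ext fun i j => by simp only [onesOffDiag, eq_comm], fun _ => if_pos rfl,
    onesOffDiag_apply_mem_Icc N, hs⟩

theorem convexComb_onesOffDiag_mem_feasibleSet (E : Finset (Fin k × Fin k))
    {x : Matrix (Fin N) (Fin N) ℝ} {s s' b : ℝ} (hx : x ∈ feasibleSet (homDensity E) s)
    (hb₀ : 0 ≤ b) (hb₁ : b ≤ 1)
    (hs' : s' ≤ (1 - b ^ #E) * s + b ^ #E * homDensity E (onesOffDiag N)) :
    (1 - b) • x + b • onesOffDiag N ∈ feasibleSet (homDensity E) s' := by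
  obtain ⟨hsym, hdiag, hicc, hxs⟩ := hx
  obtain ⟨hJsym, hJdiag, hJicc, -⟩ :=
    onesOffDiag_mem_feasibleSet (T := homDensity E) le_rfl
  have hxJ : ∀ i j, x i j ≤ onesOffDiag N i j := fun i j => by
    rcases eq_or_ne i j with rfl | hij
    · rw [hdiag, hJdiag]
    · simpa [onesOffDiag, hij] using (hicc i j).2
  refine ⟨(hsym.smul _).add (hJsym.smul _), fun i => by simp [hdiag, hJdiag],
    fun i j => convex_Icc 0 1 (hicc i j) (hJicc i j) (sub_nonneg.2 hb₁) hb₀ (by ring), ?_⟩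
  calc s' ≤ (1 - b ^ #E) * s + b ^ #E * homDensity E (onesOffDiag N) := hs'
    _ ≤ (1 - b ^ #E) * homDensity E x + b ^ #E * homDensity E (onesOffDiag N) := by
      gcongr
      exact sub_nonneg.2 (pow_le_one₀ hb₀ hb₁)
    _ ≤ homDensity E ((1 - b) • x + b • onesOffDiag N) :=
      homDensity_convexComb_ge E (fun i j => (hicc i j).1) hxJ hb₀ hb₁

theorem exists_mem_feasibleSet_relEntropy_le {p : ℝ} (hp : p ∈ Set.Ioo 0 1)
    (E : Finset (Fin k × Fin k)) {x : Matrix (Fin N) (Fin N) ℝ} {s s' b : ℝ}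
    (hx : x ∈ feasibleSet (homDensity E) s) (hb₀ : 0 ≤ b) (hb₁ : b ≤ 1)
    (hs' : s' ≤ (1 - b ^ #E) * s + b ^ #E * homDensity E (onesOffDiag N)) :
    ∃ y : Matrix (Fin N) (Fin N) ℝ, y ∈ feasibleSet (homDensity E) s' ∧
      relEntropy p y ≤ relEntropy p x + b * relEntropy p (onesOffDiag N) := by
  refine ⟨_, convexComb_onesOffDiag_mem_feasibleSet E hx hb₀ hb₁ hs', ?_⟩
  have hconv := relEntropy_convexComb_le hp hx.2.2.1 (onesOffDiag_apply_mem_Icc N) hb₀ hb₁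
  have hx₀ := relEntropy_nonneg hp hx.2.2.1
  nlinarith

theorem bddBelow_relEntropy_image_feasibleSet {p : ℝ} (hp : p ∈ Set.Ioo 0 1)
    (T : Matrix (Fin N) (Fin N) ℝ → ℝ) (s : ℝ) :
    BddBelow (relEntropy p '' feasibleSet T s) :=
  ⟨0, Set.forall_mem_image.2 fun _ hx => relEntropy_nonneg hp hx.2.2.1⟩

end Matrices

theorem stmt_16_general (N k : ℕ)
    (E : Finset (Fin k × Fin k)) (hm : 1 ≤ E.card)
    (p : ℝ) (hp : p ∈ Set.Ioo (0:ℝ) 1)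
    (n : ℝ) (hn : n = N * (N - 1) / 2)
    (T : Matrix (Fin N) (Fin N) ℝ → ℝ)
    (hT : ∀ x, T x = (∑ q : Fin k → Fin N, ∏ e ∈ E, x (q e.1) (q e.2))
      / (N : ℝ) ^ (k - 2))
    (Ip : Matrix (Fin N) (Fin N) ℝ → ℝ)
    (hIp : ∀ x, Ip x = ∑ c ∈ Finset.univ.filter (fun c : Fin N × Fin N => c.1 < c.2),
        (x c.1 c.2 * Real.log (x c.1 c.2 / p) +
         (1 - x c.1 c.2) * Real.log ((1 - x c.1 c.2) / (1 - p))))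
    (φ : ℝ → ℝ)
    (hφ : ∀ t, φ t = sInf (Ip '' {x : Matrix (Fin N) (Fin N) ℝ |
        x.IsSymm ∧ (∀ i, x i i = 0) ∧ (∀ i j, x i j ∈ Set.Icc (0:ℝ) 1) ∧
        T x ≥ t * n}))
    (t₀ : ℝ)
    (ht₀ : t₀ = T (fun i j => if i = j then 0 else 1) / n)
    (t δ : ℝ) (hδ : 0 < δ) (htδ : δ < t) (ht : t < t₀) :
    φ (t - δ) ≥ φ t - (δ / (t₀ - t)) ^ ((1 : ℝ) / E.card) * n * Real.log (1 / p) := by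
  obtain rfl : T = homDensity E := funext hT
  obtain rfl : Ip = relEntropy p := funext hIp
  clear hT hIp
  replace hφ : ∀ s, φ s = sInf (relEntropy p '' feasibleSet (homDensity E) (s * n)) := hφ
  replace ht₀ : t₀ = homDensity E (onesOffDiag N) / n := ht₀
  have hn₀ : 0 < n := by
    refine lt_of_le_of_ne (by rw [hn, ← Nat.cast_choose_two]; positivity) ?_
    rintro rfl
    rw [div_zero] at ht₀
    linarith
  have hJ : homDensity E (onesOffDiag N) = t₀ * n := by rw [ht₀, div_mul_cancel₀ _ hn₀.ne']
  have hIpJ : relEntropy p (onesOffDiag N) = n * log (1 / p) := by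
    rw [relEntropy_onesOffDiag, hn]
  have hq : 0 ≤ δ / (t₀ - t) := (div_pos hδ (sub_pos.2 ht)).le
  set b := (δ / (t₀ - t)) ^ ((1 : ℝ) / #E)
  have hlevel : t * n ≤ (1 - min b 1 ^ #E) * ((t - δ) * n)
      + min b 1 ^ #E * homDensity E (onesOffDiag N) := by
    have h := mul_le_mul_of_nonneg_right (le_one_sub_min_div_mul_add_min_div_mul hδ.le ht) hn₀.le
    rw [hJ, min_rpow_one_div_pow hq (by omega)]
    linarith
  have hJmem : onesOffDiag N ∈ feasibleSet (homDensity E) ((t - δ) * n) :=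
    onesOffDiag_mem_feasibleSet (by rw [hJ]; nlinarith)
  have key := csInf_image_le_csInf_image_add ⟨_, hJmem⟩
    (bddBelow_relEntropy_image_feasibleSet hp _ (t * n)) fun x hx =>
      exists_mem_feasibleSet_relEntropy_le hp E hx (le_min (rpow_nonneg hq _) zero_le_one)
        (min_le_right b 1) hlevel
  have hcost : min b 1 * (n * log (1 / p)) ≤ b * n * log (1 / p) := by
    rw [mul_assoc]
    exact mul_le_mul_of_nonneg_right (min_le_left b 1)
      (mul_nonneg hn₀.le (log_nonneg (one_le_one_div hp.1 hp.2.le)))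
  rw [hIpJ] at key
  rw [hφ, hφ]
  linarith

theorem stmt_16 (N k : ℕ) (hk : 2 ≤ k)
    (E : Finset (Fin k × Fin k)) (hE : ∀ e ∈ E, e.1 < e.2) (hm : 1 ≤ E.card)
    (p : ℝ) (hp : p ∈ Set.Ioo (0:ℝ) 1)
    (n : ℝ) (hn : n = N * (N - 1) / 2)
    (T : Matrix (Fin N) (Fin N) ℝ → ℝ)
    (hT : ∀ x, T x = (∑ q : Fin k → Fin N, ∏ e ∈ E, x (q e.1) (q e.2))
      / (N : ℝ) ^ (k - 2))
    (Ip : Matrix (Fin N) (Fin N) ℝ → ℝ)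
    (hIp : ∀ x, Ip x = ∑ c ∈ Finset.univ.filter (fun c : Fin N × Fin N => c.1 < c.2),
        (x c.1 c.2 * Real.log (x c.1 c.2 / p) +
         (1 - x c.1 c.2) * Real.log ((1 - x c.1 c.2) / (1 - p))))
    (φ : ℝ → ℝ)
    (hφ : ∀ t, φ t = sInf (Ip '' {x : Matrix (Fin N) (Fin N) ℝ |
        x.IsSymm ∧ (∀ i, x i i = 0) ∧ (∀ i j, x i j ∈ Set.Icc (0:ℝ) 1) ∧
        T x ≥ t * n}))
    (t₀ : ℝ)
    (ht₀ : t₀ = T (fun i j => if i = j then 0 else 1) / n)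
    (t δ : ℝ) (hδ : 0 < δ) (htδ : δ < t) (ht : t < t₀) :
    φ (t - δ) ≥ φ t - (δ / (t₀ - t)) ^ ((1 : ℝ) / E.card) * n * Real.log (1 / p) :=
  stmt_16_general N k E hm p hp n hn T hT Ip hIp φ hφ t₀ ht₀ t δ hδ htδ ht
end
end
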